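/- arXiv:1108.3526 — 2 statements merged into one kernel-verified Lean document; each statement's English description precedes it below -/
import Mathlib

section
/- For ribbon graphs P and Q and n ≥ 2, the Euler genus of the partial dual of an n-sum satisfies the strict inequality γ((P ⊕_n Q)^{E(Q)}) = γ((P ⊕_n Q)^{E(P)}) > γ(P) + γ(Q). -/
/-!
A combinatorial model of ribbon graphs (cellularly embedded graphs), following
the flag / three-involution (graph-encoded map) presentation.  A ribbon graph
consists of a finite set of flags `flags` inside an ambient type `F`, a finite
set `fverts` of tokens representing isolated (bare) vertices, and three
involutions `s0, s1, s2` of `F` supported on `flags`, with `s0` and `s2`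
commuting.  Vertices correspond to orbits of `⟨s1, s2⟩` on flags (plus the bare
vertices), edges to orbits of `⟨s0, s2⟩`, and boundary components to orbits of
`⟨s0, s1⟩`.  Chmutov's partial dual with respect to an edge subset `A` swaps
the roles of `s0` and `s2` on the flags of `A`.
-/

namespace RibbonPaper

open Function

variable {F : Type*} [DecidableEq F] [Fintype F]

structure RibbonGraph (F : Type*) [DecidableEq F] [Fintype F] where
  flags : Finset F
  fverts : Finset F
  disj : ∀ x ∈ fverts, x ∉ flags
  s0 : Equiv.Perm F
  s1 : Equiv.Perm F
  s2 : Equiv.Perm F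
  fix0 : ∀ x ∉ flags, s0 x = x
  fix1 : ∀ x ∉ flags, s1 x = x
  fix2 : ∀ x ∉ flags, s2 x = x
  inv0 : ∀ x, s0 (s0 x) = x
  inv1 : ∀ x, s1 (s1 x) = x
  inv2 : ∀ x, s2 (s2 x) = x
  comm02 : ∀ x, s0 (s2 x) = s2 (s0 x)

namespace RibbonGraph

attribute [local instance] Classical.propDecidable

/-- An involution supported on `S` preserves `S`. -/
lemma perm_mem_of {p : Equiv.Perm F} {S : Finset F}
    (hfix : ∀ x ∉ S, p x = x) (hinv : ∀ x, p (p x) = x)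
    {x : F} (hx : x ∈ S) : p x ∈ S := by
  by_contra hc
  have h1 : p (p x) = p x := hfix _ hc
  rw [hinv x] at h1
  exact hc (h1 ▸ hx)

/-- The function acting as `v` on `A` and as `u` off `A`. -/
def mixFun (u v : Equiv.Perm F) (A : Finset F) : F → F :=
  fun x => if x ∈ A then v x else u x

lemma involutive_mixFun {u v : Equiv.Perm F} {A : Finset F}
    (hu : ∀ x, u (u x) = x) (hv : ∀ x, v (v x) = x)
    (hA : ∀ x ∈ A, u x ∈ A ∧ v x ∈ A) :
    Function.Involutive (mixFun u v A) := by
  intro x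
  by_cases hx : x ∈ A
  · have h1 : v x ∈ A := (hA x hx).2
    simp only [mixFun, if_pos hx, if_pos h1]
    exact hv x
  · have h1 : u x ∉ A := by
      intro hc
      have h2 : u (u x) ∈ A := (hA _ hc).1
      rw [hu x] at h2
      exact hx h2
    simp only [mixFun, if_neg hx, if_neg h1]
    exact hu x

/-- The permutation acting as `v` on `A` and as `u` off `A` (junk value `u`
if this fails to be an involution). -/
noncomputable def mix (u v : Equiv.Perm F) (A : Finset F) : Equiv.Perm F :=
  if h : Function.Involutive (mixFun u v A) then Function.Involutive.toPerm _ h else u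

lemma mix_apply {u v : Equiv.Perm F} {A : Finset F}
    (h : Function.Involutive (mixFun u v A)) (x : F) :
    mix u v A x = mixFun u v A x := by
  simp only [mix, dif_pos h]
  rfl

/-- `A` is (the set of flags of) a subset of the edge set `E(G)`:
it consists of flags and is a union of `⟨s0, s2⟩`-orbits, i.e. of edges. -/
def IsEdgeSubset (G : RibbonGraph F) (A : Finset F) : Prop :=
  A ⊆ G.flags ∧ ∀ x ∈ A, G.s0 x ∈ A ∧ G.s2 x ∈ A

/-- The partial dual `G^A` of `G` with respect to the edge subset `A`
(Chmutov): the involutions `s0` and `s2` are interchanged on the flags of the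
edges of `A`.  (Junk value `G` if `A` is not a union of edges.) -/
noncomputable def partialDual (G : RibbonGraph F) (A : Finset F) : RibbonGraph F :=
  if h : G.IsEdgeSubset A then
    have h02 : Function.Involutive (mixFun G.s0 G.s2 A) :=
      involutive_mixFun G.inv0 G.inv2 h.2
    have h20 : Function.Involutive (mixFun G.s2 G.s0 A) :=
      involutive_mixFun G.inv2 G.inv0 (fun x hx => ⟨(h.2 x hx).2, (h.2 x hx).1⟩)
    { flags := G.flags
      fverts := G.fverts
      disj := G.disj
      s0 := mix G.s0 G.s2 A
      s1 := G.s1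
      s2 := mix G.s2 G.s0 A
      fix0 := by
        intro x hx
        have hxA : x ∉ A := fun hc => hx (h.1 hc)
        rw [mix_apply h02]
        simp only [mixFun, if_neg hxA]
        exact G.fix0 x hx
      fix1 := G.fix1
      fix2 := by
        intro x hx
        have hxA : x ∉ A := fun hc => hx (h.1 hc)
        rw [mix_apply h20]
        simp only [mixFun, if_neg hxA]
        exact G.fix2 x hx
      inv0 := by
        intro x
        rw [mix_apply h02, mix_apply h02]
        exact h02 x
      inv1 := G.inv1
      inv2 := by
        intro x
        rw [mix_apply h20, mix_apply h20]
        exact h20 x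
      comm02 := by
        intro x
        simp only [mix_apply h02, mix_apply h20]
        by_cases hx : x ∈ A
        · have h0 : G.s0 x ∈ A := (h.2 x hx).1
          have h2 : G.s2 x ∈ A := (h.2 x hx).2
          simp only [mixFun, if_pos hx, if_pos h0, if_pos h2]
          exact (G.comm02 x).symm
        · have h0 : G.s0 x ∉ A := fun hc => hx (by rw [← G.inv0 x]; exact (h.2 _ hc).1)
          have h2 : G.s2 x ∉ A := fun hc => hx (by rw [← G.inv2 x]; exact (h.2 _ hc).2)
          simp only [mixFun, if_neg hx, if_neg h0, if_neg h2]
          exact G.comm02 x }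
  else G

/-- The geometric dual `G*`: the roles of `s0` and `s2` (vertices and faces)
are interchanged everywhere. -/
def gdual (G : RibbonGraph F) : RibbonGraph F where
  flags := G.flags
  fverts := G.fverts
  disj := G.disj
  s0 := G.s2
  s1 := G.s1
  s2 := G.s0
  fix0 := G.fix2
  fix1 := G.fix1
  fix2 := G.fix0
  inv0 := G.inv2
  inv1 := G.inv1
  inv2 := G.inv0
  comm02 := fun x => (G.comm02 x).symm

/-- First return map: the first point of the forward `p`-orbit of `x`
lying in `A` (junk value `x` if there is none). -/
noncomputable def ret (p : Equiv.Perm F) (A : Finset F) (x : F) : F := by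
  classical
  exact if h : ∃ k : ℕ, (p ^ k) x ∈ A then (p ^ (Nat.find h)) x else x

/-- The corner pairing of the subgraph induced by the edges of `A`: travel
around the vertex, skipping flags of deleted edges. -/
noncomputable def indS1fun (G : RibbonGraph F) (A : Finset F) : F → F :=
  fun x => if x ∈ A then ret (G.s1 * G.s2) A (G.s1 x) else x

noncomputable def indS1 (G : RibbonGraph F) (A : Finset F) : Equiv.Perm F :=
  if h : Function.Involutive (indS1fun G A) then Function.Involutive.toPerm _ h else 1

lemma indS1_apply {G : RibbonGraph F} {A : Finset F}
    (h : Function.Involutive (indS1fun G A)) (x : F) :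
    indS1 G A x = indS1fun G A x := by
  simp only [indS1, dif_pos h]
  rfl

lemma indS1_apply_junk {G : RibbonGraph F} {A : Finset F}
    (h : ¬ Function.Involutive (indS1fun G A)) (x : F) :
    indS1 G A x = x := by
  simp only [indS1, dif_neg h]
  rfl

/-- The ribbon subgraph `G|_A` induced by the edge subset `A`: its flags are
those of the edges of `A`, and its vertices are the vertices of `G` incident
with `A`.  (Junk value `G` if `A` is not a union of edges.) -/
noncomputable def induce (G : RibbonGraph F) (A : Finset F) : RibbonGraph F :=
  if h : G.IsEdgeSubset A then
    have h0 : Function.Involutive (mixFun 1 G.s0 A) :=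
      involutive_mixFun (fun _ => rfl) G.inv0 (fun x hx => ⟨by simpa using hx, (h.2 x hx).1⟩)
    have h2 : Function.Involutive (mixFun 1 G.s2 A) :=
      involutive_mixFun (fun _ => rfl) G.inv2 (fun x hx => ⟨by simpa using hx, (h.2 x hx).2⟩)
    { flags := A
      fverts := ∅
      disj := by simp
      s0 := mix 1 G.s0 A
      s1 := indS1 G A
      s2 := mix 1 G.s2 A
      fix0 := by
        intro x hx
        rw [mix_apply h0]
        simp only [mixFun, if_neg hx]
        rfl
      fix1 := by
        intro x hx
        by_cases h' : Function.Involutive (indS1fun G A)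
        · rw [indS1_apply h']
          simp only [indS1fun, if_neg hx]
        · exact indS1_apply_junk h' x
      fix2 := by
        intro x hx
        rw [mix_apply h2]
        simp only [mixFun, if_neg hx]
        rfl
      inv0 := by
        intro x
        rw [mix_apply h0, mix_apply h0]
        exact h0 x
      inv1 := by
        intro x
        by_cases h' : Function.Involutive (indS1fun G A)
        · rw [indS1_apply h', indS1_apply h']
          exact h' x
        · rw [indS1_apply_junk h', indS1_apply_junk h']
      inv2 := by
        intro x
        rw [mix_apply h2, mix_apply h2]
        exact h2 x
      comm02 := by
        intro x
        simp only [mix_apply h0, mix_apply h2]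
        by_cases hx : x ∈ A
        · have m0 : G.s0 x ∈ A := (h.2 x hx).1
          have m2 : G.s2 x ∈ A := (h.2 x hx).2
          simp only [mixFun, if_pos hx, if_pos m0, if_pos m2]
          exact G.comm02 x
        · simp only [mixFun, if_neg hx, Equiv.Perm.one_apply] }
  else G

/-- Two flags are related if some generator maps one to the other. -/
def permRel (gens : Set (Equiv.Perm F)) (a b : F) : Prop := ∃ g ∈ gens, g a = b

/-- The orbit of `x` under the group generated by `gens`. -/
def orbitOf (gens : Set (Equiv.Perm F)) (x : F) : Set F :=
  {y | Relation.EqvGen (permRel gens) x y}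

/-- The number of orbits of the group generated by `gens` meeting `S`. -/
noncomputable def countOrbits (gens : Set (Equiv.Perm F)) (S : Set F) : ℕ :=
  (orbitOf gens '' S).ncard

/-- The number of vertices: orbits of `⟨s1, s2⟩` on the flags, plus bare vertices. -/
noncomputable def numVertices (G : RibbonGraph F) : ℕ :=
  countOrbits {G.s1, G.s2} ↑G.flags + G.fverts.card

/-- The number of edges: orbits of `⟨s0, s2⟩` on the flags. -/
noncomputable def numEdges (G : RibbonGraph F) : ℕ :=
  countOrbits {G.s0, G.s2} ↑G.flags

/-- The number of boundary components: orbits of `⟨s0, s1⟩` on the flags,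
plus one for each bare vertex. -/
noncomputable def numBoundary (G : RibbonGraph F) : ℕ :=
  countOrbits {G.s0, G.s1} ↑G.flags + G.fverts.card

/-- The number of connected components. -/
noncomputable def numComponents (G : RibbonGraph F) : ℕ :=
  countOrbits {G.s0, G.s1, G.s2} ↑G.flags + G.fverts.card

/-- The Euler characteristic `χ(G) = V - E` of the ribbon graph viewed as a
surface with boundary. -/
noncomputable def eulerChar (G : RibbonGraph F) : ℤ :=
  (G.numVertices : ℤ) - (G.numEdges : ℤ)

/-- The Euler genus `γ(G) = 2c(G) - χ(G) - b(G)`, additive over components. -/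
noncomputable def eulerGenus (G : RibbonGraph F) : ℤ :=
  2 * (G.numComponents : ℤ) - G.eulerChar - (G.numBoundary : ℤ)

def Connected (G : RibbonGraph F) : Prop := G.numComponents = 1

/-- `G` is orientable iff its flags admit a proper 2-colouring with respect to
all three involutions. -/
def Orientable (G : RibbonGraph F) : Prop :=
  ∃ f : F → Bool, ∀ x ∈ G.flags,
    f (G.s0 x) ≠ f x ∧ f (G.s1 x) ≠ f x ∧ f (G.s2 x) ≠ f x

/-- A plane ribbon graph: connected with Euler genus `0`. -/
def IsPlane (G : RibbonGraph F) : Prop := G.Connected ∧ G.eulerGenus = 0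

/-- An `ℝP²` ribbon graph: connected, non-orientable, Euler genus `1`. -/
def IsRP2 (G : RibbonGraph F) : Prop :=
  G.Connected ∧ ¬ G.Orientable ∧ G.eulerGenus = 1

noncomputable def toFin (s : Set F) : Finset F := (Set.toFinite s).toFinset

/-- The connected component of `G` containing the flag `x`, as a ribbon graph. -/
noncomputable def componentOf (G : RibbonGraph F) (x : F) : RibbonGraph F :=
  G.induce (toFin (orbitOf {G.s0, G.s1, G.s2} x))

/-- The vertex of `G` containing the flag `x`, as a set of flags. -/
def vertexOrbit (G : RibbonGraph F) (x : F) : Set F := orbitOf {G.s1, G.s2} x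

def IsVertexOrbit (G : RibbonGraph F) (v : Set F) : Prop :=
  ∃ x ∈ G.flags, v = G.vertexOrbit x

/-- `v` is a vertex of `G`: either a `⟨s1,s2⟩`-orbit of flags or a bare vertex. -/
def IsVertex (G : RibbonGraph F) (v : Set F) : Prop :=
  G.IsVertexOrbit v ∨ ∃ t ∈ G.fverts, v = {t}

/-- The vertices of `G` shared by the subgraphs `P` and `Q`. -/
def sharedVerts (G P Q : RibbonGraph F) : Set (Set F) :=
  {v | G.IsVertexOrbit v ∧ (v ∩ ↑P.flags).Nonempty ∧ (v ∩ ↑Q.flags).Nonempty}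

/-- `H` is the ribbon subgraph of `G` induced by its edges. -/
def IsRibbonSubgraph (H G : RibbonGraph F) : Prop :=
  G.IsEdgeSubset H.flags ∧ H = G.induce H.flags

/-- `G = P ⊕ₙ Q` is an `n`-sum: `P` and `Q` are non-trivial connected ribbon
subgraphs with `G = P ∪ Q`, sharing no edges and exactly `n` vertices. -/
def IsNSum (G P Q : RibbonGraph F) (n : ℕ) : Prop :=
  P.IsRibbonSubgraph G ∧ Q.IsRibbonSubgraph G ∧
  P.Connected ∧ Q.Connected ∧ P.flags.Nonempty ∧ Q.flags.Nonempty ∧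
  P.flags ∪ Q.flags = G.flags ∧ P.flags ∩ Q.flags = ∅ ∧
  (G.sharedVerts P Q).ncard = n

/-- `H` is a connected component of `G|_A`. -/
def SideA (G : RibbonGraph F) (A : Finset F) (H : RibbonGraph F) : Prop :=
  ∃ x ∈ A, H = (G.induce A).componentOf x

/-- `H` is a connected component of `G|_{Aᶜ}`. -/
def SideB (G : RibbonGraph F) (A : Finset F) (H : RibbonGraph F) : Prop :=
  SideA G (G.flags \ A) H

/-- `G` is written as the sequence of 1-sums `H 0 ⊕ H 1 ⊕ ⋯ ⊕ H (l-1)`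
(partial sums `S`), where the summands are the components of `G|_A` and
`G|_{Aᶜ}`, every flag of `G` is covered, and each 1-sum involves a component
of `G|_A` and a component of `G|_{Aᶜ}`. -/
def BisepSeq (G : RibbonGraph F) (A : Finset F) (l : ℕ)
    (H S : ℕ → RibbonGraph F) : Prop :=
  0 < l ∧ S 0 = H 0 ∧ S (l - 1) = G ∧
  (∀ i < l, SideA G A (H i) ∨ SideB G A (H i)) ∧
  (∀ x ∈ G.flags, ∃ i < l, x ∈ (H i).flags) ∧
  ∀ i, i + 1 < l →
    IsNSum (S (i + 1)) (S i) (H (i + 1)) 1 ∧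
    ∃ j ≤ i, ((SideA G A (H (i + 1)) ∧ SideB G A (H j)) ∨
              (SideB G A (H (i + 1)) ∧ SideA G A (H j))) ∧
      G.sharedVerts (S i) (H (i + 1)) = G.sharedVerts (H j) (H (i + 1))

/-- `A` defines a biseparation of `G` (Definition 3.2): `A` is trivial, or `G`
is a sequence of 1-sums each involving a component of `G|_A` and one of
`G|_{Aᶜ}`. -/
def DefinesBiseparation (G : RibbonGraph F) (A : Finset F) : Prop :=
  A = G.flags ∨ A = ∅ ∨ ∃ l H S, BisepSeq G A l H S

/-- The component of `G|_A` or of `G|_{Aᶜ}` containing the flag `x`. -/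
noncomputable def sideComp (G : RibbonGraph F) (A : Finset F) (x : F) : RibbonGraph F :=
  if x ∈ A then (G.induce A).componentOf x else (G.induce (G.flags \ A)).componentOf x

/-- `A` defines a plane-biseparation: a biseparation in which every component
of `G|_A` and of `G|_{Aᶜ}` is plane. -/
def PlaneBiseparation (G : RibbonGraph F) (A : Finset F) : Prop :=
  G.DefinesBiseparation A ∧ ∀ x ∈ G.flags, (G.sideComp A x).IsPlane

/-- `A` defines an `ℝP²`-biseparation: a biseparation in which exactly one
component of `G|_A` or of `G|_{Aᶜ}` is an `ℝP²` ribbon graph and all other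
components are plane. -/
def RP2Biseparation (G : RibbonGraph F) (A : Finset F) : Prop :=
  G.DefinesBiseparation A ∧
  (∃ x ∈ G.flags, (G.sideComp A x).IsRP2 ∧
    ∀ y ∈ G.flags, (G.sideComp A y).IsRP2 → G.sideComp A y = G.sideComp A x) ∧
  ∀ y ∈ G.flags, ¬ (G.sideComp A y).IsRP2 → (G.sideComp A y).IsPlane

/-- `G = P ∨ Q` is a join: a 1-sum at a vertex `v` such that the flags of `P`
at `v` form an arc (an interval of the cyclic order around `v`). -/
def IsJoin (G P Q : RibbonGraph F) : Prop :=
  IsNSum G P Q 1 ∧ ∃ v ∈ G.sharedVerts P Q,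
    ({x | x ∈ v ∩ ↑P.flags ∧ (G.s2 * G.s1) x ∉ v ∩ ↑P.flags} : Set F).ncard ≤ 1

/-- `G = H 0 ∨ H 1 ∨ ⋯ ∨ H (l-1)` is a (left-associated) sequence of joins. -/
def JoinSeq (G : RibbonGraph F) (l : ℕ) (H : ℕ → RibbonGraph F) : Prop :=
  0 < l ∧ ∃ S : ℕ → RibbonGraph F, S 0 = H 0 ∧ S (l - 1) = G ∧
    ∀ i, i + 1 < l → IsJoin (S (i + 1)) (S i) (H (i + 1))

/-- `A` defines a join-biseparation of `G`: `G = H_1 ∨ ⋯ ∨ H_l` with `A` the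
union of the edge sets of some of the `H_i`. -/
def JoinBiseparation (G : RibbonGraph F) (A : Finset F) : Prop :=
  ∃ l H, JoinSeq G l H ∧ ∃ I : Set ℕ,
    (↑A : Set F) = ⋃ i ∈ {j | j < l ∧ j ∈ I}, (((H i).flags : Set F))

/-- A join-biseparation in which every join summand is plane. -/
def PlaneJoinBiseparation (G : RibbonGraph F) (A : Finset F) : Prop :=
  ∃ l H, JoinSeq G l H ∧ (∀ i < l, (H i).IsPlane) ∧ ∃ I : Set ℕ,
    (↑A : Set F) = ⋃ i ∈ {j | j < l ∧ j ∈ I}, (((H i).flags : Set F))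

/-- A join-biseparation in which exactly one join summand is `ℝP²`
and all the others are plane. -/
def RP2JoinBiseparation (G : RibbonGraph F) (A : Finset F) : Prop :=
  ∃ l H, JoinSeq G l H ∧
    (∃ i < l, (H i).IsRP2 ∧ ∀ j < l, j ≠ i → (H j).IsPlane) ∧ ∃ I : Set ℕ,
    (↑A : Set F) = ⋃ i ∈ {j | j < l ∧ j ∈ I}, (((H i).flags : Set F))

/-- `G` is prime: it is not a join of two (non-trivial) ribbon graphs. -/
def IsPrime (G : RibbonGraph F) : Prop := ¬ ∃ P Q : RibbonGraph F, IsJoin G P Q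

/-- `H` is a join-summand of `G`. -/
def IsJoinSummand (G H : RibbonGraph F) : Prop :=
  ∃ l Hs, JoinSeq G l Hs ∧ ∃ i < l, Hs i = H

/-- `B` is obtained from `A` by toggling a join-summand of `G`, i.e. by taking
the symmetric difference with the edge set of a join-summand. -/
def ToggleStep (G : RibbonGraph F) (A B : Finset F) : Prop :=
  ∃ H, G.IsJoinSummand H ∧ B = symmDiff A H.flags

/-- The disjoint union of two ribbon graphs on disjoint supports.
(Junk value `P` if the supports are not disjoint.) -/
noncomputable def disjUnion (P Q : RibbonGraph F) : RibbonGraph F :=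
  if h : Disjoint (P.flags ∪ P.fverts) (Q.flags ∪ Q.fverts) then
    have hPQ : ∀ x ∈ P.flags, x ∉ Q.flags := fun x hx hc =>
      (Finset.disjoint_left.mp h (Finset.mem_union_left _ hx)) (Finset.mem_union_left _ hc)
    have key : ∀ (p q : Equiv.Perm F), (∀ x ∉ P.flags, p x = x) → (∀ x, p (p x) = x) →
        (∀ x ∉ Q.flags, q x = x) → (∀ x, q (q x) = x) →
        Function.Involutive (mixFun q p P.flags) := fun p q hp hp2 hq hq2 =>
      involutive_mixFun hq2 hp2 (fun x hx =>
        ⟨by rw [hq x (hPQ x hx)]; exact hx, perm_mem_of hp hp2 hx⟩)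
    have h0 : Function.Involutive (mixFun Q.s0 P.s0 P.flags) :=
      key P.s0 Q.s0 P.fix0 P.inv0 Q.fix0 Q.inv0
    have h1 : Function.Involutive (mixFun Q.s1 P.s1 P.flags) :=
      key P.s1 Q.s1 P.fix1 P.inv1 Q.fix1 Q.inv1
    have h2 : Function.Involutive (mixFun Q.s2 P.s2 P.flags) :=
      key P.s2 Q.s2 P.fix2 P.inv2 Q.fix2 Q.inv2
    { flags := P.flags ∪ Q.flags
      fverts := P.fverts ∪ Q.fverts
      disj := by
        intro x hx hc
        rcases Finset.mem_union.mp hx with hxP | hxQ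
        · rcases Finset.mem_union.mp hc with hcP | hcQ
          · exact P.disj x hxP hcP
          · exact (Finset.disjoint_left.mp h (Finset.mem_union_right _ hxP))
              (Finset.mem_union_left _ hcQ)
        · rcases Finset.mem_union.mp hc with hcP | hcQ
          · exact (Finset.disjoint_left.mp h (Finset.mem_union_left _ hcP))
              (Finset.mem_union_right _ hxQ)
          · exact Q.disj x hxQ hcQ
      s0 := mix Q.s0 P.s0 P.flags
      s1 := mix Q.s1 P.s1 P.flags
      s2 := mix Q.s2 P.s2 P.flags
      fix0 := by
        intro x hx
        have hxP : x ∉ P.flags := fun hc => hx (Finset.mem_union_left _ hc)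
        have hxQ : x ∉ Q.flags := fun hc => hx (Finset.mem_union_right _ hc)
        rw [mix_apply h0]
        simp only [mixFun, if_neg hxP]
        exact Q.fix0 x hxQ
      fix1 := by
        intro x hx
        have hxP : x ∉ P.flags := fun hc => hx (Finset.mem_union_left _ hc)
        have hxQ : x ∉ Q.flags := fun hc => hx (Finset.mem_union_right _ hc)
        rw [mix_apply h1]
        simp only [mixFun, if_neg hxP]
        exact Q.fix1 x hxQ
      fix2 := by
        intro x hx
        have hxP : x ∉ P.flags := fun hc => hx (Finset.mem_union_left _ hc)
        have hxQ : x ∉ Q.flags := fun hc => hx (Finset.mem_union_right _ hc)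
        rw [mix_apply h2]
        simp only [mixFun, if_neg hxP]
        exact Q.fix2 x hxQ
      inv0 := by
        intro x
        rw [mix_apply h0, mix_apply h0]
        exact h0 x
      inv1 := by
        intro x
        rw [mix_apply h1, mix_apply h1]
        exact h1 x
      inv2 := by
        intro x
        rw [mix_apply h2, mix_apply h2]
        exact h2 x
      comm02 := by
        intro x
        simp only [mix_apply h0, mix_apply h2]
        by_cases hx : x ∈ P.flags
        · have m2 : P.s2 x ∈ P.flags := perm_mem_of P.fix2 P.inv2 hx
          have m0 : P.s0 x ∈ P.flags := perm_mem_of P.fix0 P.inv0 hx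
          simp only [mixFun, if_pos hx, if_pos m2, if_pos m0]
          exact P.comm02 x
        · have m2 : Q.s2 x ∉ P.flags := by
            by_cases hq : x ∈ Q.flags
            · intro hc
              exact hPQ _ hc (perm_mem_of Q.fix2 Q.inv2 hq)
            · rw [Q.fix2 x hq]; exact hx
          have m0 : Q.s0 x ∉ P.flags := by
            by_cases hq : x ∈ Q.flags
            · intro hc
              exact hPQ _ hc (perm_mem_of Q.fix0 Q.inv0 hq)
            · rw [Q.fix0 x hq]; exact hx
          simp only [mixFun, if_neg hx, if_neg m2, if_neg m0]
          exact Q.comm02 x }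
  else P

/-! ### Auxiliary lemmas for Statement 10 -/

section Statement10Aux

open Relation

lemma eqvGen_of_eqvGen {r r' : F → F → Prop}
    (h : ∀ a b, r a b → EqvGen r' a b) :
    ∀ {a b : F}, EqvGen r a b → EqvGen r' a b := by
  intro a b hab
  induction hab with
  | rel x y hxy => exact h x y hxy
  | refl x => exact EqvGen.refl x
  | symm x y _ ih => exact EqvGen.symm _ _ ih
  | trans x y z _ _ ih1 ih2 => exact EqvGen.trans _ _ _ ih1 ih2

lemma mem_orbitOf_iff {gens : Set (Equiv.Perm F)} {x y : F} :
    y ∈ orbitOf gens x ↔ EqvGen (permRel gens) x y := Iff.rfl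

lemma mem_orbitOf_self (gens : Set (Equiv.Perm F)) (x : F) :
    x ∈ orbitOf gens x := EqvGen.refl x

lemma orbitOf_eq_of_mem {gens : Set (Equiv.Perm F)} {x y : F}
    (h : y ∈ orbitOf gens x) : orbitOf gens y = orbitOf gens x := by
  ext z
  simp only [mem_orbitOf_iff] at *
  exact ⟨fun hz => EqvGen.trans _ _ _ h hz,
    fun hz => EqvGen.trans _ _ _ (EqvGen.symm _ _ h) hz⟩

lemma mem_orbit_step {gens : Set (Equiv.Perm F)} {x y z : F}
    (hy : y ∈ orbitOf gens x) (hr : permRel gens y z) : z ∈ orbitOf gens x :=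
  EqvGen.trans _ _ _ hy (EqvGen.rel _ _ hr)

lemma permRel_pair {p q : Equiv.Perm F} {a b : F} :
    permRel {p, q} a b ↔ p a = b ∨ q a = b := by
  constructor
  · rintro ⟨g, hg, rfl⟩
    simp only [Set.mem_insert_iff, Set.mem_singleton_iff] at hg
    rcases hg with rfl | rfl
    · exact Or.inl rfl
    · exact Or.inr rfl
  · rintro (h | h)
    · exact ⟨p, Set.mem_insert _ _, h⟩
    · exact ⟨q, by simp, h⟩

lemma permRel_triple {p q r : Equiv.Perm F} {a b : F} :
    permRel {p, q, r} a b ↔ p a = b ∨ q a = b ∨ r a = b := by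
  constructor
  · rintro ⟨g, hg, rfl⟩
    simp only [Set.mem_insert_iff, Set.mem_singleton_iff] at hg
    rcases hg with rfl | rfl | rfl
    · exact Or.inl rfl
    · exact Or.inr (Or.inl rfl)
    · exact Or.inr (Or.inr rfl)
  · rintro (h | h | h)
    · exact ⟨p, Set.mem_insert _ _, h⟩
    · exact ⟨q, by simp, h⟩
    · exact ⟨r, by simp, h⟩

lemma orbitOf_congr {g1 g2 : Set (Equiv.Perm F)}
    (h : ∀ a b, permRel g1 a b ↔ permRel g2 a b) :
    orbitOf g1 = orbitOf g2 := by
  funext x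
  ext y
  simp only [mem_orbitOf_iff]
  constructor
  · exact eqvGen_of_eqvGen fun a b hab => EqvGen.rel a b ((h a b).mp hab)
  · exact eqvGen_of_eqvGen fun a b hab => EqvGen.rel a b ((h a b).mpr hab)

lemma countOrbits_congr {g1 g2 : Set (Equiv.Perm F)}
    (h : ∀ a b, permRel g1 a b ↔ permRel g2 a b) (S : Set F) :
    countOrbits g1 S = countOrbits g2 S := by
  unfold countOrbits
  rw [orbitOf_congr h]

/-- The union of coarse orbits over a set. -/
def orbitMap (gens : Set (Equiv.Perm F)) (O : Set F) : Set F :=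
  ⋃ y ∈ O, orbitOf gens y

lemma orbitMap_eq_orbitOf {gens : Set (Equiv.Perm F)} {O : Set F} {x : F}
    (hx : x ∈ O) (h : ∀ y ∈ O, orbitOf gens y = orbitOf gens x) :
    orbitMap gens O = orbitOf gens x := by
  apply subset_antisymm
  · exact Set.iUnion₂_subset fun y hy => (h y hy).le
  · intro z hz
    exact Set.mem_biUnion hx ((h x hx) ▸ hz)

lemma orbitMap_orbitOf_eq {gf gc : Set (Equiv.Perm F)}
    (h : ∀ a b, permRel gf a b → EqvGen (permRel gc) a b) (x : F) :
    orbitMap gc (orbitOf gf x) = orbitOf gc x := by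
  apply orbitMap_eq_orbitOf (mem_orbitOf_self _ x)
  intro y hy
  exact orbitOf_eq_of_mem (eqvGen_of_eqvGen h hy)

lemma countOrbits_le_of_refines {gf gc : Set (Equiv.Perm F)}
    (h : ∀ a b, permRel gf a b → EqvGen (permRel gc) a b) (S : Set F) :
    countOrbits gc S ≤ countOrbits gf S := by
  have him : orbitOf gc '' S = orbitMap gc '' (orbitOf gf '' S) := by
    rw [← Set.image_comp]
    exact Set.image_congr fun x _ => (orbitMap_orbitOf_eq h x).symm
  unfold countOrbits
  rw [him]
  exact Set.ncard_image_le (Set.toFinite _)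

lemma eqvGen_mem_iff {r : F → F → Prop} {S : Set F}
    (h : ∀ a b, r a b → (a ∈ S ↔ b ∈ S)) :
    ∀ {a b : F}, EqvGen r a b → (a ∈ S ↔ b ∈ S) := by
  intro a b hab
  induction hab with
  | rel x y hxy => exact h x y hxy
  | refl x => exact Iff.rfl
  | symm x y _ ih => exact ih.symm
  | trans x y z _ _ ih1 ih2 => exact ih1.trans ih2

lemma permRel_mem_iff {gens : Set (Equiv.Perm F)} {S : Set F}
    (h : ∀ p ∈ gens, ∀ x, x ∈ S ↔ p x ∈ S) :
    ∀ a b, permRel gens a b → (a ∈ S ↔ b ∈ S) := by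
  rintro a b ⟨g, hg, rfl⟩
  exact h g hg a

lemma orbitOf_subset_of_closed {gens : Set (Equiv.Perm F)} {S : Set F}
    (h : ∀ p ∈ gens, ∀ x, x ∈ S ↔ p x ∈ S) {x : F} (hx : x ∈ S) :
    orbitOf gens x ⊆ S := fun _ hy =>
  (eqvGen_mem_iff (permRel_mem_iff h) hy).mp hx

lemma eqvGen_local {r1 r2 : F → F → Prop} {S : Set F}
    (hmem : ∀ a b, r1 a b → (a ∈ S ↔ b ∈ S))
    (hagree : ∀ a ∈ S, ∀ b, r1 a b → r2 a b) :
    ∀ {a b : F}, EqvGen r1 a b → a ∈ S → EqvGen r2 a b := by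
  intro a b hab
  induction hab with
  | rel x y hxy => exact fun hx => EqvGen.rel _ _ (hagree x hx y hxy)
  | refl x => exact fun _ => EqvGen.refl x
  | symm x y hxy ih =>
    intro hy
    have hx : x ∈ S := (eqvGen_mem_iff hmem hxy).mpr hy
    exact EqvGen.symm _ _ (ih hx)
  | trans x y z h1 _ ih1 ih2 =>
    intro hx
    have hy : y ∈ S := (eqvGen_mem_iff hmem h1).mp hx
    exact EqvGen.trans _ _ _ (ih1 hx) (ih2 hy)

lemma orbitOf_eq_on_closed {g1 g2 : Set (Equiv.Perm F)} {S : Set F}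
    (h1 : ∀ p ∈ g1, ∀ x, x ∈ S ↔ p x ∈ S)
    (h2 : ∀ p ∈ g2, ∀ x, x ∈ S ↔ p x ∈ S)
    (hag : ∀ a ∈ S, ∀ b, permRel g1 a b ↔ permRel g2 a b)
    {x : F} (hx : x ∈ S) : orbitOf g1 x = orbitOf g2 x := by
  ext y
  simp only [mem_orbitOf_iff]
  constructor
  · intro hy
    exact eqvGen_local (permRel_mem_iff h1)
      (fun a ha b hab => (hag a ha b).mp hab) hy hx
  · intro hy
    exact eqvGen_local (permRel_mem_iff h2)
      (fun a ha b hab => (hag a ha b).mpr hab) hy hx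

lemma countOrbits_eq_on_closed {g1 g2 : Set (Equiv.Perm F)} {S : Set F}
    (h1 : ∀ p ∈ g1, ∀ x, x ∈ S ↔ p x ∈ S)
    (h2 : ∀ p ∈ g2, ∀ x, x ∈ S ↔ p x ∈ S)
    (hag : ∀ a ∈ S, ∀ b, permRel g1 a b ↔ permRel g2 a b) :
    countOrbits g1 S = countOrbits g2 S := by
  unfold countOrbits
  exact congrArg Set.ncard
    (Set.image_congr fun x hx => orbitOf_eq_on_closed h1 h2 hag hx)

lemma countOrbits_union_disjoint {gens : Set (Equiv.Perm F)} {S T : Set F}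
    (hd : Disjoint S T)
    (hS : ∀ x ∈ S, orbitOf gens x ⊆ S) (hT : ∀ x ∈ T, orbitOf gens x ⊆ T) :
    countOrbits gens (S ∪ T) = countOrbits gens S + countOrbits gens T := by
  unfold countOrbits
  rw [Set.image_union]
  apply Set.ncard_union_eq _ (Set.toFinite _) (Set.toFinite _)
  rw [Set.disjoint_left]
  rintro O ⟨x, hx, rfl⟩ ⟨y, hy, hOy⟩
  have h1 : x ∈ orbitOf gens y := hOy ▸ mem_orbitOf_self gens x
  exact hd.le_bot ⟨hS x hx (mem_orbitOf_self gens x), hT y hy h1⟩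

end Statement10Aux

section Statement10Fields

open Relation

variable (G : RibbonGraph F) {A : Finset F}

lemma partialDual_flags (h : G.IsEdgeSubset A) :
    (G.partialDual A).flags = G.flags := by
  unfold partialDual
  rw [dif_pos h]

lemma partialDual_fverts (h : G.IsEdgeSubset A) :
    (G.partialDual A).fverts = G.fverts := by
  unfold partialDual
  rw [dif_pos h]

lemma partialDual_s1 (h : G.IsEdgeSubset A) :
    (G.partialDual A).s1 = G.s1 := by
  unfold partialDual
  rw [dif_pos h]

lemma partialDual_s0_apply (h : G.IsEdgeSubset A) (x : F) :
    (G.partialDual A).s0 x = if x ∈ A then G.s2 x else G.s0 x := by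
  unfold partialDual
  rw [dif_pos h]
  show mix G.s0 G.s2 A x = _
  rw [mix_apply (involutive_mixFun G.inv0 G.inv2 h.2)]
  rfl

lemma partialDual_s2_apply (h : G.IsEdgeSubset A) (x : F) :
    (G.partialDual A).s2 x = if x ∈ A then G.s0 x else G.s2 x := by
  unfold partialDual
  rw [dif_pos h]
  show mix G.s2 G.s0 A x = _
  rw [mix_apply (involutive_mixFun G.inv2 G.inv0
    (fun x hx => ⟨(h.2 x hx).2, (h.2 x hx).1⟩))]
  rfl

lemma induce_flags (h : G.IsEdgeSubset A) :
    (G.induce A).flags = A := by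
  unfold induce
  rw [dif_pos h]

lemma induce_fverts (h : G.IsEdgeSubset A) :
    (G.induce A).fverts = ∅ := by
  unfold induce
  rw [dif_pos h]

lemma induce_s1 (h : G.IsEdgeSubset A) :
    (G.induce A).s1 = indS1 G A := by
  unfold induce
  rw [dif_pos h]

lemma induce_s0_apply (h : G.IsEdgeSubset A) (x : F) :
    (G.induce A).s0 x = if x ∈ A then G.s0 x else x := by
  unfold induce
  rw [dif_pos h]
  show mix 1 G.s0 A x = _
  rw [mix_apply (involutive_mixFun (fun _ => rfl) G.inv0
    (fun x hx => ⟨by simpa using hx, (h.2 x hx).1⟩))]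
  unfold mixFun
  split <;> rfl

lemma induce_s2_apply (h : G.IsEdgeSubset A) (x : F) :
    (G.induce A).s2 x = if x ∈ A then G.s2 x else x := by
  unfold induce
  rw [dif_pos h]
  show mix 1 G.s2 A x = _
  rw [mix_apply (involutive_mixFun (fun _ => rfl) G.inv2
    (fun x hx => ⟨by simpa using hx, (h.2 x hx).2⟩))]
  unfold mixFun
  split <;> rfl

lemma ret_cases (p : Equiv.Perm F) (A : Finset F) (x : F) :
    ∃ k, (∀ j < k, ((p ^ j) x) ∉ A) ∧ ret p A x = (p ^ k) x := by
  unfold ret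
  split
  · next hex => exact ⟨Nat.find hex, fun j hj => Nat.find_min hex hj, rfl⟩
  · next => exact ⟨0, fun j hj => absurd hj (Nat.not_lt_zero j), by simp⟩

lemma pow_flags : ∀ (k : ℕ) (z : F), z ∈ G.flags →
    ((G.s1 * G.s2) ^ k) z ∈ G.flags := by
  intro k
  induction k with
  | zero => intro z hz; simpa using hz
  | succ k ih =>
    intro z hz
    have h1 : ((G.s1 * G.s2) ^ (k + 1)) z = G.s1 (G.s2 (((G.s1 * G.s2) ^ k) z)) := by
      rw [pow_succ']
      simp [Equiv.Perm.mul_apply]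
    rw [h1]
    exact perm_mem_of G.fix1 G.inv1 (perm_mem_of G.fix2 G.inv2 (ih z hz))

lemma chain_pd (h : G.IsEdgeSubset A) :
    ∀ (k : ℕ) (z : F), z ∈ G.flags → (∀ j < k, ((G.s1 * G.s2) ^ j) z ∉ A) →
      EqvGen (permRel {(G.partialDual A).s1, (G.partialDual A).s2})
        z (((G.s1 * G.s2) ^ k) z) := by
  intro k
  induction k with
  | zero => intro z _ _; simpa using EqvGen.refl z
  | succ k ih =>
    intro z hz hskip
    have h1 := ih z hz (fun j hj => hskip j (Nat.lt_succ_of_lt hj))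
    have hwf : ((G.s1 * G.s2) ^ k) z ∈ G.flags := pow_flags G k z hz
    have hwA : ((G.s1 * G.s2) ^ k) z ∉ A := hskip k (Nat.lt_succ_self k)
    have e2 : (G.partialDual A).s2 (((G.s1 * G.s2) ^ k) z)
        = G.s2 (((G.s1 * G.s2) ^ k) z) := by
      rw [partialDual_s2_apply G h, if_neg hwA]
    have step1 : EqvGen (permRel {(G.partialDual A).s1, (G.partialDual A).s2})
        (((G.s1 * G.s2) ^ k) z) (G.s2 (((G.s1 * G.s2) ^ k) z)) :=
      EqvGen.rel _ _ ⟨(G.partialDual A).s2, by simp, e2⟩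
    have e1 : (G.partialDual A).s1 (G.s2 (((G.s1 * G.s2) ^ k) z))
        = G.s1 (G.s2 (((G.s1 * G.s2) ^ k) z)) := by
      rw [partialDual_s1 G h]
    have step2 : EqvGen (permRel {(G.partialDual A).s1, (G.partialDual A).s2})
        (G.s2 (((G.s1 * G.s2) ^ k) z)) (G.s1 (G.s2 (((G.s1 * G.s2) ^ k) z))) :=
      EqvGen.rel _ _ ⟨(G.partialDual A).s1, by simp, e1⟩
    have hrw : ((G.s1 * G.s2) ^ (k + 1)) z
        = G.s1 (G.s2 (((G.s1 * G.s2) ^ k) z)) := by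
      rw [pow_succ']
      simp [Equiv.Perm.mul_apply]
    rw [hrw]
    exact EqvGen.trans _ _ _ h1 (EqvGen.trans _ _ _ step1 step2)

lemma ret_eqv (h : G.IsEdgeSubset A) (z : F) (hz : z ∈ G.flags) :
    EqvGen (permRel {(G.partialDual A).s1, (G.partialDual A).s2})
      z (ret (G.s1 * G.s2) A z) := by
  obtain ⟨k, hmin, heq⟩ := ret_cases (G.s1 * G.s2) A z
  rw [heq]
  exact chain_pd G h k z hz hmin

lemma chain_vert : ∀ (k : ℕ) (z : F),
    EqvGen (permRel {G.s1, G.s2}) z (((G.s1 * G.s2) ^ k) z) := by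
  intro k
  induction k with
  | zero => intro z; simpa using EqvGen.refl z
  | succ k ih =>
    intro z
    have step1 : EqvGen (permRel {G.s1, G.s2})
        (((G.s1 * G.s2) ^ k) z) (G.s2 (((G.s1 * G.s2) ^ k) z)) :=
      EqvGen.rel _ _ ⟨G.s2, by simp, rfl⟩
    have step2 : EqvGen (permRel {G.s1, G.s2})
        (G.s2 (((G.s1 * G.s2) ^ k) z)) (G.s1 (G.s2 (((G.s1 * G.s2) ^ k) z))) :=
      EqvGen.rel _ _ ⟨G.s1, by simp, rfl⟩
    have hrw : ((G.s1 * G.s2) ^ (k + 1)) z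
        = G.s1 (G.s2 (((G.s1 * G.s2) ^ k) z)) := by
      rw [pow_succ']
      simp [Equiv.Perm.mul_apply]
    rw [hrw]
    exact EqvGen.trans _ _ _ (ih z) (EqvGen.trans _ _ _ step1 step2)

lemma ret_eqv_vert (z : F) (B : Finset F) :
    EqvGen (permRel {G.s1, G.s2}) z (ret (G.s1 * G.s2) B z) := by
  obtain ⟨k, _, heq⟩ := ret_cases (G.s1 * G.s2) B z
  rw [heq]
  exact chain_vert G k z

end Statement10Fields

section Statement10Core

open Relation

variable (G : RibbonGraph F) {A B : Finset F}

/-- The boundary relation of `G|_A` refines the vertex relation of `G^A`. -/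
lemma induce_refines_pd (h : G.IsEdgeSubset A) :
    ∀ a b, permRel {(G.induce A).s0, (G.induce A).s1} a b →
      EqvGen (permRel {(G.partialDual A).s1, (G.partialDual A).s2}) a b := by
  intro a b hab
  rw [permRel_pair] at hab
  rcases hab with hb | hb
  · by_cases haA : a ∈ A
    · refine EqvGen.rel _ _ ⟨(G.partialDual A).s2, by simp, ?_⟩
      rw [partialDual_s2_apply G h, if_pos haA, ← hb, induce_s0_apply G h,
        if_pos haA]
    · rw [← hb, induce_s0_apply G h, if_neg haA]
      exact EqvGen.refl a
  · rw [induce_s1 G h] at hb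
    by_cases hinv : Function.Involutive (indS1fun G A)
    · rw [indS1_apply hinv] at hb
      unfold indS1fun at hb
      by_cases haA : a ∈ A
      · rw [if_pos haA] at hb
        have haf : a ∈ G.flags := h.1 haA
        have h1f : G.s1 a ∈ G.flags := perm_mem_of G.fix1 G.inv1 haf
        have s1step : EqvGen
            (permRel {(G.partialDual A).s1, (G.partialDual A).s2}) a (G.s1 a) :=
          EqvGen.rel _ _ ⟨(G.partialDual A).s1, by simp, by
            rw [partialDual_s1 G h]⟩
        rw [← hb]
        exact EqvGen.trans _ _ _ s1step (ret_eqv G h (G.s1 a) h1f)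
      · rw [if_neg haA] at hb
        rw [← hb]
        exact EqvGen.refl a
    · rw [indS1_apply_junk hinv] at hb
      rw [← hb]
      exact EqvGen.refl a

/-- The vertex relation of `G|_A` refines the vertex relation of `G`. -/
lemma induce_refines_vert (h : G.IsEdgeSubset A) :
    ∀ a b, permRel {(G.induce A).s1, (G.induce A).s2} a b →
      EqvGen (permRel {G.s1, G.s2}) a b := by
  intro a b hab
  rw [permRel_pair] at hab
  rcases hab with hb | hb
  · rw [induce_s1 G h] at hb
    by_cases hinv : Function.Involutive (indS1fun G A)
    · rw [indS1_apply hinv] at hb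
      unfold indS1fun at hb
      by_cases haA : a ∈ A
      · rw [if_pos haA] at hb
        have s1step : EqvGen (permRel {G.s1, G.s2}) a (G.s1 a) :=
          EqvGen.rel _ _ ⟨G.s1, by simp, rfl⟩
        rw [← hb]
        exact EqvGen.trans _ _ _ s1step (ret_eqv_vert G (G.s1 a) A)
      · rw [if_neg haA] at hb
        rw [← hb]
        exact EqvGen.refl a
    · rw [indS1_apply_junk hinv] at hb
      rw [← hb]
      exact EqvGen.refl a
  · by_cases haA : a ∈ A
    · refine EqvGen.rel _ _ ⟨G.s2, by simp, ?_⟩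
      rw [← hb, induce_s2_apply G h, if_pos haA]
    · rw [← hb, induce_s2_apply G h, if_neg haA]
      exact EqvGen.refl a

/-- Key upper bound: the number of vertices of `G^A` is at most the number of
boundary components of `G|_A` plus the number of vertices of `G` avoiding the
flags of `A`. -/
lemma pd_vert_count_le (h : G.IsEdgeSubset A) :
    countOrbits {(G.partialDual A).s1, (G.partialDual A).s2} ↑G.flags ≤
      countOrbits {(G.induce A).s0, (G.induce A).s1} ↑A +
      {w ∈ orbitOf {G.s1, G.s2} '' ↑G.flags | w ∩ ↑A = ∅}.ncard := by
  classical
  have hsub : orbitOf {(G.partialDual A).s1, (G.partialDual A).s2} '' ↑G.flags ⊆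
      (orbitOf {(G.partialDual A).s1, (G.partialDual A).s2} '' ↑A) ∪
      (orbitMap {(G.partialDual A).s1, (G.partialDual A).s2} ''
        {w ∈ orbitOf {G.s1, G.s2} '' ↑G.flags | w ∩ ↑A = ∅}) := by
    rintro O ⟨x, hx, rfl⟩
    by_cases hmeet :
        (orbitOf {(G.partialDual A).s1, (G.partialDual A).s2} x ∩ ↑A).Nonempty
    · obtain ⟨a, haO, haA⟩ := hmeet
      exact Or.inl ⟨a, haA, orbitOf_eq_of_mem haO⟩
    · right
      have hOA : orbitOf {(G.partialDual A).s1, (G.partialDual A).s2} x ∩ ↑A = ∅ :=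
        Set.not_nonempty_iff_eq_empty.mp hmeet
      have hnotA : ∀ y ∈ orbitOf {(G.partialDual A).s1, (G.partialDual A).s2} x,
          y ∉ A := by
        intro y hy hyA
        exact (Set.eq_empty_iff_forall_notMem.mp hOA y) ⟨hy, hyA⟩
      -- the orbit of x is closed under the vertex involutions of G
      have hstep : ∀ p ∈ ({G.s1, G.s2} : Set (Equiv.Perm F)), ∀ y,
          y ∈ orbitOf {(G.partialDual A).s1, (G.partialDual A).s2} x →
          p y ∈ orbitOf {(G.partialDual A).s1, (G.partialDual A).s2} x := by
        intro p hp y hy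
        simp only [Set.mem_insert_iff, Set.mem_singleton_iff] at hp
        rcases hp with rfl | rfl
        · exact mem_orbit_step hy ⟨(G.partialDual A).s1, by simp, by
            rw [partialDual_s1 G h]⟩
        · exact mem_orbit_step hy ⟨(G.partialDual A).s2, by simp, by
            rw [partialDual_s2_apply G h, if_neg (hnotA y hy)]⟩
      have hcl : ∀ p ∈ ({G.s1, G.s2} : Set (Equiv.Perm F)), ∀ y,
          (y ∈ orbitOf {(G.partialDual A).s1, (G.partialDual A).s2} x ↔
            p y ∈ orbitOf {(G.partialDual A).s1, (G.partialDual A).s2} x) := by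
        intro p hp y
        constructor
        · exact hstep p hp y
        · intro hpy
          have h2 := hstep p hp (p y) hpy
          have hpp : p (p y) = y := by
            simp only [Set.mem_insert_iff, Set.mem_singleton_iff] at hp
            rcases hp with rfl | rfl
            · exact G.inv1 y
            · exact G.inv2 y
          rwa [hpp] at h2
      have hvsub : orbitOf {G.s1, G.s2} x ⊆
          orbitOf {(G.partialDual A).s1, (G.partialDual A).s2} x :=
        orbitOf_subset_of_closed hcl (mem_orbitOf_self _ x)
      refine ⟨orbitOf {G.s1, G.s2} x, ⟨⟨x, hx, rfl⟩, ?_⟩, ?_⟩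
      · apply Set.eq_empty_of_subset_empty
        rw [← hOA]
        exact Set.inter_subset_inter_left _ hvsub
      · apply orbitMap_eq_orbitOf (mem_orbitOf_self _ x)
        intro y hy
        exact orbitOf_eq_of_mem (hvsub hy)
  calc countOrbits {(G.partialDual A).s1, (G.partialDual A).s2} ↑G.flags
      ≤ ((orbitOf {(G.partialDual A).s1, (G.partialDual A).s2} '' ↑A) ∪
        (orbitMap {(G.partialDual A).s1, (G.partialDual A).s2} ''
          {w ∈ orbitOf {G.s1, G.s2} '' ↑G.flags | w ∩ ↑A = ∅})).ncard :=
        Set.ncard_le_ncard hsub (Set.toFinite _)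
    _ ≤ (orbitOf {(G.partialDual A).s1, (G.partialDual A).s2} '' ↑A).ncard +
        (orbitMap {(G.partialDual A).s1, (G.partialDual A).s2} ''
          {w ∈ orbitOf {G.s1, G.s2} '' ↑G.flags | w ∩ ↑A = ∅}).ncard :=
        Set.ncard_union_le _ _
    _ ≤ countOrbits {(G.induce A).s0, (G.induce A).s1} ↑A +
        {w ∈ orbitOf {G.s1, G.s2} '' ↑G.flags | w ∩ ↑A = ∅}.ncard := by
        exact Nat.add_le_add
          (countOrbits_le_of_refines (induce_refines_pd G h) ↑A)
          (Set.ncard_image_le (Set.toFinite _))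

/-- Key lower bound: the number of vertices of the induced ribbon subgraph
`G|_B` is at least the number of vertices of `G` meeting the flags of `B`. -/
lemma meets_count_le (h : G.IsEdgeSubset B) :
    {v ∈ orbitOf {G.s1, G.s2} '' ↑G.flags | (v ∩ ↑B).Nonempty}.ncard ≤
      countOrbits {(G.induce B).s1, (G.induce B).s2} ↑B := by
  classical
  have hsub : {v ∈ orbitOf {G.s1, G.s2} '' ↑G.flags | (v ∩ ↑B).Nonempty} ⊆
      orbitMap {G.s1, G.s2} ''
        (orbitOf {(G.induce B).s1, (G.induce B).s2} '' ↑B) := by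
    rintro v ⟨⟨x, hx, rfl⟩, ⟨y, hyv, hyB⟩⟩
    refine ⟨orbitOf {(G.induce B).s1, (G.induce B).s2} y, ⟨y, hyB, rfl⟩, ?_⟩
    rw [orbitMap_orbitOf_eq (induce_refines_vert G h) y]
    exact orbitOf_eq_of_mem hyv
  calc {v ∈ orbitOf {G.s1, G.s2} '' ↑G.flags | (v ∩ ↑B).Nonempty}.ncard
      ≤ (orbitMap {G.s1, G.s2} ''
          (orbitOf {(G.induce B).s1, (G.induce B).s2} '' ↑B)).ncard :=
        Set.ncard_le_ncard hsub (Set.toFinite _)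
    _ ≤ countOrbits {(G.induce B).s1, (G.induce B).s2} ↑B :=
        Set.ncard_image_le (Set.toFinite _)

end Statement10Core

section Statement10Partition

open Relation

lemma orbit_vert_subset_flags (G : RibbonGraph F) {x : F} (hx : x ∈ G.flags) :
    orbitOf {G.s1, G.s2} x ⊆ ↑G.flags := by
  apply orbitOf_subset_of_closed _ (Finset.mem_coe.mpr hx)
  intro p hp y
  simp only [Set.mem_insert_iff, Set.mem_singleton_iff] at hp
  have hfix : ∀ z ∉ G.flags, p z = z := by
    rcases hp with rfl | rfl
    · exact G.fix1
    · exact G.fix2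
  have hinv : ∀ z, p (p z) = z := by
    rcases hp with rfl | rfl
    · exact G.inv1
    · exact G.inv2
  constructor
  · intro hy
    exact Finset.mem_coe.mpr (perm_mem_of hfix hinv (Finset.mem_coe.mp hy))
  · intro hpy
    by_contra hy
    rw [hfix y (fun hc => hy (Finset.mem_coe.mpr hc))] at hpy
    exact hy hpy

lemma sharedVerts_eq (G P Q : RibbonGraph F) :
    G.sharedVerts P Q = {v ∈ orbitOf {G.s1, G.s2} '' ↑G.flags |
      (v ∩ ↑P.flags).Nonempty ∧ (v ∩ ↑Q.flags).Nonempty} := by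
  ext v
  unfold sharedVerts IsVertexOrbit vertexOrbit
  simp only [Set.mem_setOf_eq, Set.mem_sep_iff, Set.mem_image]
  constructor
  · rintro ⟨⟨x, hx, rfl⟩, h1, h2⟩
    exact ⟨⟨x, Finset.mem_coe.mpr hx, rfl⟩, h1, h2⟩
  · rintro ⟨⟨x, hx, rfl⟩, h1, h2⟩
    exact ⟨⟨x, Finset.mem_coe.mp hx, rfl⟩, h1, h2⟩

lemma sharedVerts_comm (G P Q : RibbonGraph F) :
    G.sharedVerts Q P = G.sharedVerts P Q := by
  rw [sharedVerts_eq, sharedVerts_eq]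
  ext v
  simp only [Set.mem_sep_iff]
  tauto

lemma meets_ncard (G P Q : RibbonGraph F) (hU : P.flags ∪ Q.flags = G.flags) :
    {v ∈ orbitOf {G.s1, G.s2} '' ↑G.flags | (v ∩ ↑P.flags).Nonempty}.ncard =
      {v ∈ orbitOf {G.s1, G.s2} '' ↑G.flags | v ∩ ↑Q.flags = ∅}.ncard +
      (G.sharedVerts P Q).ncard := by
  classical
  rw [sharedVerts_eq]
  have hdecomp : {v ∈ orbitOf {G.s1, G.s2} '' ↑G.flags | (v ∩ ↑P.flags).Nonempty} =
      {v ∈ orbitOf {G.s1, G.s2} '' ↑G.flags | v ∩ ↑Q.flags = ∅} ∪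
      {v ∈ orbitOf {G.s1, G.s2} '' ↑G.flags |
        (v ∩ ↑P.flags).Nonempty ∧ (v ∩ ↑Q.flags).Nonempty} := by
    ext v
    simp only [Set.mem_sep_iff, Set.mem_union]
    constructor
    · rintro ⟨hv, hP⟩
      by_cases hQ : (v ∩ ↑Q.flags).Nonempty
      · exact Or.inr ⟨hv, hP, hQ⟩
      · exact Or.inl ⟨hv, Set.not_nonempty_iff_eq_empty.mp hQ⟩
    · rintro (⟨hv, hQ⟩ | ⟨hv, hP, _⟩)
      · refine ⟨hv, ?_⟩
        obtain ⟨x, hx, rfl⟩ := hv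
        refine ⟨x, mem_orbitOf_self _ x, ?_⟩
        have hxf : x ∈ G.flags := Finset.mem_coe.mp hx
        have : x ∈ P.flags ∪ Q.flags := hU ▸ hxf
        rcases Finset.mem_union.mp this with hxP | hxQ
        · exact Finset.mem_coe.mpr hxP
        · exact absurd ⟨mem_orbitOf_self _ x, Finset.mem_coe.mpr hxQ⟩
            (Set.eq_empty_iff_forall_notMem.mp hQ x)
      · exact ⟨hv, hP⟩
  rw [hdecomp]
  apply Set.ncard_union_eq _ (Set.toFinite _) (Set.toFinite _)
  rw [Set.disjoint_left]
  rintro v ⟨_, hQe⟩ ⟨_, _, hQne⟩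
  rw [hQe] at hQne
  exact Set.not_nonempty_empty hQne

end Statement10Partition

/-- For an `n`-sum `G = P ⊕ₙ Q` with `n ≥ 2`,
`γ(G^{E(Q)}) = γ(G^{E(P)}) > γ(P) + γ(Q)`. -/
theorem eulerGenus_partialDual_nsum_gt (G P Q : RibbonGraph F) (n : ℕ)
    (hn : 2 ≤ n) (h : IsNSum G P Q n) :
    (G.partialDual Q.flags).eulerGenus = (G.partialDual P.flags).eulerGenus ∧
    (G.partialDual Q.flags).eulerGenus > P.eulerGenus + Q.eulerGenus := by
  classical
  unfold IsNSum at h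
  obtain ⟨hPsub, hQsub, hPc, hQc, hPne, _, hU, hD, hsh⟩ := h
  unfold IsRibbonSubgraph at hPsub hQsub
  obtain ⟨hBE, hPind⟩ := hPsub
  obtain ⟨hAE, hQind⟩ := hQsub
  -- basic membership facts
  have hdisj : ∀ x : F, x ∈ P.flags → x ∉ Q.flags := by
    intro x hx hq
    have hm : x ∈ P.flags ∩ Q.flags := Finset.mem_inter.mpr ⟨hx, hq⟩
    rw [hD] at hm
    exact absurd hm (Finset.notMem_empty x)
  have hnf : ∀ x : F, x ∉ P.flags → x ∉ Q.flags → x ∉ G.flags := by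
    intro x hp hq hf
    rw [← hU] at hf
    rcases Finset.mem_union.mp hf with hm | hm
    exacts [hp hm, hq hm]
  -- pointwise descriptions and cross identities
  have e1A : (G.partialDual Q.flags).s1 = G.s1 := partialDual_s1 G hAE
  have e1B : (G.partialDual P.flags).s1 = G.s1 := partialDual_s1 G hBE
  have hx02 : ∀ x, (G.partialDual Q.flags).s0 x = (G.partialDual P.flags).s2 x := by
    intro x
    rw [partialDual_s0_apply G hAE, partialDual_s2_apply G hBE]
    by_cases hq : x ∈ Q.flags
    · rw [if_pos hq, if_neg (fun hp => hdisj x hp hq)]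
    · rw [if_neg hq]
      by_cases hp : x ∈ P.flags
      · rw [if_pos hp]
      · rw [if_neg hp, G.fix0 x (hnf x hp hq), G.fix2 x (hnf x hp hq)]
  have hx20 : ∀ x, (G.partialDual Q.flags).s2 x = (G.partialDual P.flags).s0 x := by
    intro x
    rw [partialDual_s2_apply G hAE, partialDual_s0_apply G hBE]
    by_cases hq : x ∈ Q.flags
    · rw [if_pos hq, if_neg (fun hp => hdisj x hp hq)]
    · rw [if_neg hq]
      by_cases hp : x ∈ P.flags
      · rw [if_pos hp]
      · rw [if_neg hp, G.fix0 x (hnf x hp hq), G.fix2 x (hnf x hp hq)]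
  -- Euler genus formulas
  have fvA := partialDual_fverts G hAE
  have flA := partialDual_flags G hAE
  have fvB := partialDual_fverts G hBE
  have flB := partialDual_flags G hBE
  have hγA : (G.partialDual Q.flags).eulerGenus =
      2 * (countOrbits {(G.partialDual Q.flags).s0, (G.partialDual Q.flags).s1,
          (G.partialDual Q.flags).s2} ↑G.flags : ℤ)
      - (countOrbits {(G.partialDual Q.flags).s1,
          (G.partialDual Q.flags).s2} ↑G.flags : ℤ)
      + (countOrbits {(G.partialDual Q.flags).s0,
          (G.partialDual Q.flags).s2} ↑G.flags : ℤ)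
      - (countOrbits {(G.partialDual Q.flags).s0,
          (G.partialDual Q.flags).s1} ↑G.flags : ℤ) := by
    unfold eulerGenus eulerChar numComponents numVertices numEdges numBoundary
    rw [fvA, flA]
    push_cast
    ring
  have hγB : (G.partialDual P.flags).eulerGenus =
      2 * (countOrbits {(G.partialDual P.flags).s0, (G.partialDual P.flags).s1,
          (G.partialDual P.flags).s2} ↑G.flags : ℤ)
      - (countOrbits {(G.partialDual P.flags).s1,
          (G.partialDual P.flags).s2} ↑G.flags : ℤ)
      + (countOrbits {(G.partialDual P.flags).s0,
          (G.partialDual P.flags).s2} ↑G.flags : ℤ)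
      - (countOrbits {(G.partialDual P.flags).s0,
          (G.partialDual P.flags).s1} ↑G.flags : ℤ) := by
    unfold eulerGenus eulerChar numComponents numVertices numEdges numBoundary
    rw [fvB, flB]
    push_cast
    ring
  have hPc' : P.numComponents = 1 := hPc
  have hQc' : Q.numComponents = 1 := hQc
  have hPfv : P.fverts = ∅ := by
    conv_lhs => rw [hPind]
    exact induce_fverts G hBE
  have hQfv : Q.fverts = ∅ := by
    conv_lhs => rw [hQind]
    exact induce_fverts G hAE
  have hγP : P.eulerGenus = 2 - (countOrbits {P.s1, P.s2} ↑P.flags : ℤ)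
      + (countOrbits {P.s0, P.s2} ↑P.flags : ℤ)
      - (countOrbits {P.s0, P.s1} ↑P.flags : ℤ) := by
    unfold eulerGenus eulerChar numVertices numEdges numBoundary
    rw [hPc', hPfv, Finset.card_empty]
    push_cast
    ring
  have hγQ : Q.eulerGenus = 2 - (countOrbits {Q.s1, Q.s2} ↑Q.flags : ℤ)
      + (countOrbits {Q.s0, Q.s2} ↑Q.flags : ℤ)
      - (countOrbits {Q.s0, Q.s1} ↑Q.flags : ℤ) := by
    unfold eulerGenus eulerChar numVertices numEdges numBoundary
    rw [hQc', hQfv, Finset.card_empty]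
    push_cast
    ring
  -- orbit count identities between the two partial duals
  have hbAVB : countOrbits {(G.partialDual Q.flags).s0,
      (G.partialDual Q.flags).s1} ↑G.flags =
      countOrbits {(G.partialDual P.flags).s1,
        (G.partialDual P.flags).s2} ↑G.flags := by
    refine countOrbits_congr (fun a b => ?_) _
    rw [permRel_pair, permRel_pair, hx02 a, e1A, e1B]
    tauto
  have hbBVA : countOrbits {(G.partialDual P.flags).s0,
      (G.partialDual P.flags).s1} ↑G.flags =
      countOrbits {(G.partialDual Q.flags).s1,
        (G.partialDual Q.flags).s2} ↑G.flags := by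
    refine countOrbits_congr (fun a b => ?_) _
    rw [permRel_pair, permRel_pair, ← hx20 a, e1A, e1B]
    tauto
  have hcAB : countOrbits {(G.partialDual Q.flags).s0, (G.partialDual Q.flags).s1,
      (G.partialDual Q.flags).s2} ↑G.flags =
      countOrbits {(G.partialDual P.flags).s0, (G.partialDual P.flags).s1,
        (G.partialDual P.flags).s2} ↑G.flags := by
    refine countOrbits_congr (fun a b => ?_) _
    rw [permRel_triple, permRel_triple, hx02 a, hx20 a, e1A, e1B]
    tauto
  have hEAE : countOrbits {(G.partialDual Q.flags).s0,
      (G.partialDual Q.flags).s2} ↑G.flags =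
      countOrbits {G.s0, G.s2} ↑G.flags := by
    refine countOrbits_congr (fun a b => ?_) _
    rw [permRel_pair, permRel_pair, partialDual_s0_apply G hAE,
      partialDual_s2_apply G hAE]
    by_cases hq : a ∈ Q.flags
    · rw [if_pos hq, if_pos hq]; tauto
    · rw [if_neg hq, if_neg hq]
  have hEBE : countOrbits {(G.partialDual P.flags).s0,
      (G.partialDual P.flags).s2} ↑G.flags =
      countOrbits {G.s0, G.s2} ↑G.flags := by
    refine countOrbits_congr (fun a b => ?_) _
    rw [permRel_pair, permRel_pair, partialDual_s0_apply G hBE,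
      partialDual_s2_apply G hBE]
    by_cases hp : a ∈ P.flags
    · rw [if_pos hp, if_pos hp]; tauto
    · rw [if_neg hp, if_neg hp]
  -- edge count splits over the two sides
  have hUs : (↑G.flags : Set F) = ↑P.flags ∪ ↑Q.flags := by
    rw [← hU]
    exact Finset.coe_union _ _
  have hclPG : ∀ p ∈ ({G.s0, G.s2} : Set (Equiv.Perm F)), ∀ x,
      x ∈ (↑P.flags : Set F) ↔ p x ∈ ↑P.flags := by
    intro p hp x
    simp only [Set.mem_insert_iff, Set.mem_singleton_iff] at hp
    simp only [Finset.mem_coe]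
    obtain ⟨hcl, hinv⟩ : (∀ y ∈ P.flags, p y ∈ P.flags) ∧ (∀ y, p (p y) = y) := by
      rcases hp with rfl | rfl
      · exact ⟨fun y hy => (hBE.2 y hy).1, G.inv0⟩
      · exact ⟨fun y hy => (hBE.2 y hy).2, G.inv2⟩
    constructor
    · exact fun hx => hcl x hx
    · intro hpx
      have h2 := hcl _ hpx
      rwa [hinv x] at h2
  have hclQG : ∀ p ∈ ({G.s0, G.s2} : Set (Equiv.Perm F)), ∀ x,
      x ∈ (↑Q.flags : Set F) ↔ p x ∈ ↑Q.flags := by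
    intro p hp x
    simp only [Set.mem_insert_iff, Set.mem_singleton_iff] at hp
    simp only [Finset.mem_coe]
    obtain ⟨hcl, hinv⟩ : (∀ y ∈ Q.flags, p y ∈ Q.flags) ∧ (∀ y, p (p y) = y) := by
      rcases hp with rfl | rfl
      · exact ⟨fun y hy => (hAE.2 y hy).1, G.inv0⟩
      · exact ⟨fun y hy => (hAE.2 y hy).2, G.inv2⟩
    constructor
    · exact fun hx => hcl x hx
    · intro hpx
      have h2 := hcl _ hpx
      rwa [hinv x] at h2
  have hsideP : countOrbits {G.s0, G.s2} ↑P.flags =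
      countOrbits {(G.induce P.flags).s0, (G.induce P.flags).s2} ↑P.flags := by
    refine countOrbits_eq_on_closed hclPG ?_ ?_
    · intro p hp x
      simp only [Set.mem_insert_iff, Set.mem_singleton_iff] at hp
      simp only [Finset.mem_coe]
      rcases hp with rfl | rfl
      · constructor
        · intro hx
          rw [induce_s0_apply G hBE, if_pos hx]
          exact (hBE.2 x hx).1
        · intro hpx
          by_contra hx
          rw [induce_s0_apply G hBE, if_neg hx] at hpx
          exact hx hpx
      · constructor
        · intro hx
          rw [induce_s2_apply G hBE, if_pos hx]
          exact (hBE.2 x hx).2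
        · intro hpx
          by_contra hx
          rw [induce_s2_apply G hBE, if_neg hx] at hpx
          exact hx hpx
    · intro a ha b
      rw [permRel_pair, permRel_pair, induce_s0_apply G hBE,
        induce_s2_apply G hBE, if_pos (Finset.mem_coe.mp ha),
        if_pos (Finset.mem_coe.mp ha)]
  have hsideQ : countOrbits {G.s0, G.s2} ↑Q.flags =
      countOrbits {(G.induce Q.flags).s0, (G.induce Q.flags).s2} ↑Q.flags := by
    refine countOrbits_eq_on_closed hclQG ?_ ?_
    · intro p hp x
      simp only [Set.mem_insert_iff, Set.mem_singleton_iff] at hp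
      simp only [Finset.mem_coe]
      rcases hp with rfl | rfl
      · constructor
        · intro hx
          rw [induce_s0_apply G hAE, if_pos hx]
          exact (hAE.2 x hx).1
        · intro hpx
          by_contra hx
          rw [induce_s0_apply G hAE, if_neg hx] at hpx
          exact hx hpx
      · constructor
        · intro hx
          rw [induce_s2_apply G hAE, if_pos hx]
          exact (hAE.2 x hx).2
        · intro hpx
          by_contra hx
          rw [induce_s2_apply G hAE, if_neg hx] at hpx
          exact hx hpx
    · intro a ha b
      rw [permRel_pair, permRel_pair, induce_s0_apply G hAE,
        induce_s2_apply G hAE, if_pos (Finset.mem_coe.mp ha),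
        if_pos (Finset.mem_coe.mp ha)]
  rw [← hPind] at hsideP
  rw [← hQind] at hsideQ
  have hdisjS : Disjoint (↑P.flags : Set F) (↑Q.flags : Set F) := by
    rw [Set.disjoint_left]
    intro x hx hq
    exact hdisj x (Finset.mem_coe.mp hx) (Finset.mem_coe.mp hq)
  have hE : countOrbits {G.s0, G.s2} ↑G.flags =
      countOrbits {P.s0, P.s2} ↑P.flags + countOrbits {Q.s0, Q.s2} ↑Q.flags := by
    rw [hUs, countOrbits_union_disjoint hdisjS
      (fun x hx => orbitOf_subset_of_closed hclPG hx)
      (fun x hx => orbitOf_subset_of_closed hclQG hx), hsideP, hsideQ]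
  -- the two key counting inequalities
  have hVAle := pd_vert_count_le G hAE
  rw [← hQind] at hVAle
  have hVBle := pd_vert_count_le G hBE
  rw [← hPind] at hVBle
  have hmP := meets_count_le G hBE
  rw [← hPind] at hmP
  have hmQ := meets_count_le G hAE
  rw [← hQind] at hmQ
  have hmeP := meets_ncard G P Q hU
  have hUQP : Q.flags ∪ P.flags = G.flags := by
    rw [Finset.union_comm]
    exact hU
  have hmeQ := meets_ncard G Q P hUQP
  rw [sharedVerts_comm, hsh] at hmeQ
  rw [hsh] at hmeP
  rw [hmeP] at hmP
  rw [hmeQ] at hmQ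
  -- at least one component
  obtain ⟨x0, hx0⟩ := hPne
  have hx0f : x0 ∈ G.flags := hBE.1 hx0
  have hone : 1 ≤ countOrbits {(G.partialDual Q.flags).s0,
      (G.partialDual Q.flags).s1, (G.partialDual Q.flags).s2} ↑G.flags := by
    have hne : (orbitOf {(G.partialDual Q.flags).s0, (G.partialDual Q.flags).s1,
        (G.partialDual Q.flags).s2} '' ↑G.flags).Nonempty :=
      ⟨_, Set.mem_image_of_mem _ (Finset.mem_coe.mpr hx0f)⟩
    exact (Set.ncard_pos (Set.toFinite _)).mpr hne
  constructor
  · rw [hγA, hγB, hbAVB, hbBVA, hcAB, hEAE, hEBE]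
    ring
  · rw [hγA, hγP, hγQ, hbAVB, hEAE]
    have c1 : (countOrbits {(G.partialDual Q.flags).s1,
        (G.partialDual Q.flags).s2} ↑G.flags : ℤ) ≤
        (countOrbits {Q.s0, Q.s1} ↑Q.flags : ℤ) +
        ({w ∈ orbitOf {G.s1, G.s2} '' ↑G.flags | w ∩ ↑Q.flags = ∅}.ncard : ℤ) := by
      exact_mod_cast hVAle
    have c2 : (countOrbits {(G.partialDual P.flags).s1,
        (G.partialDual P.flags).s2} ↑G.flags : ℤ) ≤
        (countOrbits {P.s0, P.s1} ↑P.flags : ℤ) +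
        ({w ∈ orbitOf {G.s1, G.s2} '' ↑G.flags | w ∩ ↑P.flags = ∅}.ncard : ℤ) := by
      exact_mod_cast hVBle
    have c3 : ({w ∈ orbitOf {G.s1, G.s2} '' ↑G.flags |
        w ∩ ↑Q.flags = ∅}.ncard : ℤ) + (n : ℤ) ≤
        (countOrbits {P.s1, P.s2} ↑P.flags : ℤ) := by
      exact_mod_cast hmP
    have c4 : ({w ∈ orbitOf {G.s1, G.s2} '' ↑G.flags |
        w ∩ ↑P.flags = ∅}.ncard : ℤ) + (n : ℤ) ≤
        (countOrbits {Q.s1, Q.s2} ↑Q.flags : ℤ) := by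
      exact_mod_cast hmQ
    have c5 : (countOrbits {G.s0, G.s2} ↑G.flags : ℤ) =
        (countOrbits {P.s0, P.s2} ↑P.flags : ℤ) +
        (countOrbits {Q.s0, Q.s2} ↑Q.flags : ℤ) := by
      exact_mod_cast hE
    have c6 : (1 : ℤ) ≤ (countOrbits {(G.partialDual Q.flags).s0,
        (G.partialDual Q.flags).s1, (G.partialDual Q.flags).s2} ↑G.flags : ℤ) := by
      exact_mod_cast hone
    have c7 : (2 : ℤ) ≤ (n : ℤ) := by exact_mod_cast hn
    linarith

end RibbonGraph

end RibbonPaper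
end

section
/- The partial dual distributes over a join: for ribbon graphs P and Q and any A ⊆ E(P ∨ Q), we have (P ∨ Q)^A = P^{E(P) ∩ A} ∨ Q^{E(Q) ∩ A}. -/
/-!
A combinatorial model of ribbon graphs (cellularly embedded graphs), following
the flag / three-involution (graph-encoded map) presentation.  A ribbon graph
consists of a finite set of flags `flags` inside an ambient type `F`, a finite
set `fverts` of tokens representing isolated (bare) vertices, and three
involutions `s0, s1, s2` of `F` supported on `flags`, with `s0` and `s2`
commuting.  Vertices correspond to orbits of `⟨s1, s2⟩` on flags (plus the bare
vertices), edges to orbits of `⟨s0, s2⟩`, and boundary components to orbits of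
`⟨s0, s1⟩`.  Chmutov's partial dual with respect to an edge subset `A` swaps
the roles of `s0` and `s2` on the flags of `A`.
-/

namespace RibbonPaper

open Function

variable {F : Type*} [DecidableEq F] [Fintype F]

namespace RibbonGraph

attribute [local instance] Classical.propDecidable

/-!
Partial duality only exchanges `s0` and `s2` on the flags of `A`; both preserve `E(P)` and
`E(Q)`, and the corner involution `s1` is untouched. In a join, the arc condition leaves a
single corner `{β, s1 β}` between an edge of `Q` and an edge of `P`. The corner map induced
on a summand (go around the vertex, skipping the flags of the other summand) is therefore
determined by `s1` and this corner alone, so taking the ribbon subgraph on `E(P)` commutes with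
partial duality. The shared vertex of `(P ∨ Q)^A` is then the vertex through `s1 β`, and the
arc condition there is witnessed by the single flag `s1 β`. Connectivity survives because at
each flag the three involutions of `G^A` take the same values as those of `G`.
-/

protected lemma ext {G H : RibbonGraph F} (hf : G.flags = H.flags) (hv : G.fverts = H.fverts)
    (h0 : G.s0 = H.s0) (h1 : G.s1 = H.s1) (h2 : G.s2 = H.s2) : G = H := by
  cases G; cases H
  dsimp only at hf hv h0 h1 h2
  subst hf hv h0 h1 h2
  rfl

section PartialDualInduce

variable {G : RibbonGraph F} {A B : Finset F}

lemma flags_partialDual (hA : G.IsEdgeSubset A) : (G.partialDual A).flags = G.flags := by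
  unfold partialDual; rw [dif_pos hA]

lemma fverts_partialDual (hA : G.IsEdgeSubset A) : (G.partialDual A).fverts = G.fverts := by
  unfold partialDual; rw [dif_pos hA]

lemma s1_partialDual (hA : G.IsEdgeSubset A) : (G.partialDual A).s1 = G.s1 := by
  unfold partialDual; rw [dif_pos hA]

lemma s0_partialDual_apply (hA : G.IsEdgeSubset A) (x : F) :
    (G.partialDual A).s0 x = if x ∈ A then G.s2 x else G.s0 x := by
  unfold partialDual; rw [dif_pos hA]
  exact mix_apply (involutive_mixFun G.inv0 G.inv2 hA.2) x

lemma s2_partialDual_apply (hA : G.IsEdgeSubset A) (x : F) :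
    (G.partialDual A).s2 x = if x ∈ A then G.s0 x else G.s2 x := by
  unfold partialDual; rw [dif_pos hA]
  exact mix_apply (involutive_mixFun G.inv2 G.inv0
    (fun x hx => ⟨(hA.2 x hx).2, (hA.2 x hx).1⟩)) x

lemma flags_induce (hB : G.IsEdgeSubset B) : (G.induce B).flags = B := by
  unfold induce; rw [dif_pos hB]

lemma fverts_induce (hB : G.IsEdgeSubset B) : (G.induce B).fverts = ∅ := by
  unfold induce; rw [dif_pos hB]

lemma s1_induce (hB : G.IsEdgeSubset B) : (G.induce B).s1 = indS1 G B := by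
  unfold induce; rw [dif_pos hB]

lemma s0_induce_apply (hB : G.IsEdgeSubset B) (x : F) :
    (G.induce B).s0 x = if x ∈ B then G.s0 x else x := by
  unfold induce; rw [dif_pos hB]
  rw [mix_apply (involutive_mixFun (fun _ => rfl) G.inv0
    (fun x hx => ⟨by simpa using hx, (hB.2 x hx).1⟩))]
  simp [mixFun]

lemma s2_induce_apply (hB : G.IsEdgeSubset B) (x : F) :
    (G.induce B).s2 x = if x ∈ B then G.s2 x else x := by
  unfold induce; rw [dif_pos hB]
  rw [mix_apply (involutive_mixFun (fun _ => rfl) G.inv2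
    (fun x hx => ⟨by simpa using hx, (hB.2 x hx).2⟩))]
  simp [mixFun]

lemma IsEdgeSubset.partialDual (hB : G.IsEdgeSubset B) (hA : G.IsEdgeSubset A) :
    (G.partialDual A).IsEdgeSubset B := by
  refine ⟨flags_partialDual hA ▸ hB.1, fun x hx => ?_⟩
  rw [s0_partialDual_apply hA, s2_partialDual_apply hA]
  by_cases hxA : x ∈ A <;> simp [hxA, hB.2 x hx]

lemma IsEdgeSubset.induce_inter (hB : G.IsEdgeSubset B) (hA : G.IsEdgeSubset A) :
    (G.induce B).IsEdgeSubset (B ∩ A) := by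
  refine ⟨by rw [flags_induce hB]; exact Finset.inter_subset_left, fun x hx => ?_⟩
  rw [Finset.mem_inter] at hx
  rw [s0_induce_apply hB, s2_induce_apply hB, if_pos hx.1, if_pos hx.1]
  exact ⟨Finset.mem_inter.2 ⟨(hB.2 x hx.1).1, (hA.2 x hx.2).1⟩,
    Finset.mem_inter.2 ⟨(hB.2 x hx.1).2, (hA.2 x hx.2).2⟩⟩

lemma partialDual_induce_inter (hB : G.IsEdgeSubset B) (hA : G.IsEdgeSubset A)
    (hs1 : indS1 (G.partialDual A) B = indS1 G B) :
    (G.induce B).partialDual (B ∩ A) = (G.partialDual A).induce B := by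
  have hBA := hB.induce_inter hA
  have hB' := hB.partialDual hA
  refine RibbonGraph.ext ?_ ?_ ?_ ?_ ?_
  · rw [flags_partialDual hBA, flags_induce hB, flags_induce hB']
  · rw [fverts_partialDual hBA, fverts_induce hB, fverts_induce hB']
  · ext x
    rw [s0_partialDual_apply hBA, s0_induce_apply hB', s0_partialDual_apply hA,
      s0_induce_apply hB, s2_induce_apply hB]
    by_cases hxB : x ∈ B <;> by_cases hxA : x ∈ A <;> simp [hxB, hxA]
  · rw [s1_partialDual hBA, s1_induce hB, s1_induce hB', hs1]
  · ext x
    rw [s2_partialDual_apply hBA, s2_induce_apply hB', s2_partialDual_apply hA,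
      s0_induce_apply hB, s2_induce_apply hB]
    by_cases hxB : x ∈ B <;> by_cases hxA : x ∈ A <;> simp [hxB, hxA]

lemma IsRibbonSubgraph.isEdgeSubset_inter {H : RibbonGraph F} (hH : H.IsRibbonSubgraph G)
    (hA : G.IsEdgeSubset A) : H.IsEdgeSubset (H.flags ∩ A) := by
  have h := hH.1.induce_inter hA
  rwa [← hH.2] at h

lemma IsRibbonSubgraph.partialDual {H : RibbonGraph F} (hH : H.IsRibbonSubgraph G)
    (hA : G.IsEdgeSubset A) (hs1 : indS1 (G.partialDual A) H.flags = indS1 G H.flags) :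
    (H.partialDual (H.flags ∩ A)).IsRibbonSubgraph (G.partialDual A) := by
  rw [IsRibbonSubgraph, flags_partialDual (hH.isEdgeSubset_inter hA)]
  refine ⟨hH.1.partialDual hA, ?_⟩
  rw [← partialDual_induce_inter hH.1 hA hs1, ← hH.2]

lemma permRel_partialDual (hA : G.IsEdgeSubset A) :
    permRel {(G.partialDual A).s0, (G.partialDual A).s1, (G.partialDual A).s2} =
      permRel {G.s0, G.s1, G.s2} := by
  funext a b
  apply propext
  simp only [permRel, Set.mem_insert_iff, Set.mem_singleton_iff, exists_eq_or_imp,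
    exists_eq_left, s0_partialDual_apply hA, s1_partialDual hA, s2_partialDual_apply hA]
  by_cases ha : a ∈ A
  · simp only [ha, if_true]
    tauto
  · simp only [ha, if_false]

lemma Connected.partialDual (hG : G.Connected) (hA : G.IsEdgeSubset A) :
    (G.partialDual A).Connected := by
  unfold Connected numComponents countOrbits orbitOf at *
  rwa [permRel_partialDual hA, flags_partialDual hA, fverts_partialDual hA]

end PartialDualInduce

section VertexOrbit

variable {G : RibbonGraph F} {x y : F}

lemma mem_vertexOrbit_self (G : RibbonGraph F) (x : F) : x ∈ G.vertexOrbit x :=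
  Relation.EqvGen.refl x

lemma s1_mem_vertexOrbit (hy : y ∈ G.vertexOrbit x) : G.s1 y ∈ G.vertexOrbit x :=
  Relation.EqvGen.trans _ _ _ hy (Relation.EqvGen.rel _ _ ⟨G.s1, by simp, rfl⟩)

lemma s2_mem_vertexOrbit (hy : y ∈ G.vertexOrbit x) : G.s2 y ∈ G.vertexOrbit x :=
  Relation.EqvGen.trans _ _ _ hy (Relation.EqvGen.rel _ _ ⟨G.s2, by simp, rfl⟩)

lemma mem_vertexOrbit_s1 (G : RibbonGraph F) (x : F) : x ∈ G.vertexOrbit (G.s1 x) := by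
  have h := s1_mem_vertexOrbit (mem_vertexOrbit_self G (G.s1 x))
  rwa [G.inv1] at h

lemma vertexOrbit_eq_of_mem (hy : y ∈ G.vertexOrbit x) : G.vertexOrbit y = G.vertexOrbit x := by
  ext z
  exact ⟨fun hz => Relation.EqvGen.trans _ _ _ hy hz,
    fun hz => Relation.EqvGen.trans _ _ _ (Relation.EqvGen.symm _ _ hy) hz⟩

lemma mem_of_mem_vertexOrbit {S : Set F} (h1 : ∀ x ∈ S, G.s1 x ∈ S)
    (h2 : ∀ x ∈ S, G.s2 x ∈ S) (hx : x ∈ S) (hy : y ∈ G.vertexOrbit x) : y ∈ S := by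
  suffices ∀ a b, Relation.EqvGen (permRel {G.s1, G.s2}) a b → (a ∈ S ↔ b ∈ S) from
    (this x y hy).1 hx
  intro a b hab
  induction hab with
  | rel a b hab =>
    obtain ⟨g, hg, rfl⟩ := hab
    rcases hg with rfl | rfl
    · exact ⟨h1 a, fun h => G.inv1 a ▸ h1 _ h⟩
    · exact ⟨h2 a, fun h => G.inv2 a ▸ h2 _ h⟩
  | refl => exact Iff.rfl
  | symm _ _ _ ih => exact ih.symm
  | trans _ _ _ _ _ ih1 ih2 => exact ih1.trans ih2

end VertexOrbit

lemma ret_spec {p : Equiv.Perm F} {A : Finset F} {x : F} (hex : ∃ k : ℕ, (p ^ k) x ∈ A) :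
    ∃ k : ℕ, ret p A x = (p ^ k) x ∧ (p ^ k) x ∈ A ∧ ∀ j < k, (p ^ j) x ∉ A := by
  unfold ret
  rw [dif_pos hex]
  exact ⟨_, rfl, Nat.find_spec hex, fun j hj => Nat.find_min hex hj⟩

lemma ret_of_mem {p : Equiv.Perm F} {A : Finset F} {x : F} (hx : x ∈ A) : ret p A x = x := by
  obtain ⟨k, hval, -, hmin⟩ := ret_spec (p := p) ⟨0, hx⟩
  obtain rfl : k = 0 := by
    by_contra hk
    exact hmin 0 (Nat.pos_of_ne_zero hk) hx
  exact hval

/-- For `t = s1`: `β` and `s1 β` are the flags at the only corner leading from an edge of `Qf`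
to an edge of `Pf`. -/
def IsUniqueCrossing {α : Type*} (t : Equiv.Perm α) (Pf Qf : Finset α) (β : α) : Prop :=
  β ∈ Qf ∧ t β ∈ Pf ∧ ∀ y ∈ Qf, t y ∈ Pf → y = β

lemma IsUniqueCrossing.symm {α : Type*} {t : Equiv.Perm α} {Pf Qf : Finset α} {β : α}
    (ht : ∀ x, t (t x) = x) (h : IsUniqueCrossing t Pf Qf β) :
    IsUniqueCrossing t Qf Pf (t β) :=
  ⟨h.2.1, (ht β).symm ▸ h.1,
    fun y hyP hyQ => by rw [← h.2.2 _ hyQ ((ht y).symm ▸ hyP), ht]⟩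

section Crossing

variable {G : RibbonGraph F} {Pf Qf : Finset F} {β u w : F}

lemma s1_mem_union_of_mem_left (hU : Pf ∪ Qf = G.flags) {x : F} (hx : x ∈ Pf) :
    G.s1 x ∈ Pf ∪ Qf :=
  hU ▸ perm_mem_of G.fix1 G.inv1 (hU ▸ Finset.mem_union_left _ hx)

lemma exists_crossing_of_mem_vertexOrbit (hU : Pf ∪ Qf = G.flags) (hP : G.IsEdgeSubset Pf)
    (hu : u ∈ Pf) (hw : w ∈ G.vertexOrbit u) (hwP : w ∉ Pf) :
    ∃ y ∈ Qf, G.s1 y ∈ Pf := by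
  by_contra! hno
  refine hwP (mem_of_mem_vertexOrbit (S := ↑Pf) (fun x hx => ?_) (fun x hx => (hP.2 x hx).2)
    hu hw)
  refine (Finset.mem_union.1 (s1_mem_union_of_mem_left hU hx)).resolve_right fun hQ => hno _ hQ ?_
  rwa [G.inv1]

lemma s1_mem_vertexOrbit_of_isUniqueCrossing (hU : Pf ∪ Qf = G.flags)
    (hP : G.IsEdgeSubset Pf) (hc : IsUniqueCrossing G.s1 Pf Qf β)
    (hu : u ∈ Pf) (hw : w ∈ G.vertexOrbit u) (hwP : w ∉ Pf) :
    G.s1 β ∈ G.vertexOrbit u := by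
  -- `Pf` together with the vertex through the crossing corner is closed under `s1` and `s2`
  have hS := mem_of_mem_vertexOrbit (S := ↑Pf ∪ G.vertexOrbit (G.s1 β)) ?_ ?_ (Or.inl hu) hw
  · have hw' : w ∈ G.vertexOrbit (G.s1 β) := hS.resolve_left hwP
    rw [← vertexOrbit_eq_of_mem hw, vertexOrbit_eq_of_mem hw']
    exact mem_vertexOrbit_self _ _
  · rintro x (hx | hx)
    · rcases Finset.mem_union.1 (s1_mem_union_of_mem_left hU hx) with h | h
      · exact Or.inl h
      · right
        rw [hc.2.2 _ h (by rwa [G.inv1])]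
        exact mem_vertexOrbit_s1 _ _
    · exact Or.inr (s1_mem_vertexOrbit hx)
  · rintro x (hx | hx)
    · exact Or.inl (hP.2 x hx).2
    · exact Or.inr (s2_mem_vertexOrbit hx)

lemma ret_eq_of_isUniqueCrossing (hU : Pf ∪ Qf = G.flags) (hD : Disjoint Pf Qf)
    (hP : G.IsEdgeSubset Pf) (hQ : G.IsEdgeSubset Qf) (hc : IsUniqueCrossing G.s1 Pf Qf β) :
    ret (G.s1 * G.s2) Pf β = G.s1 β := by
  set p := G.s1 * G.s2
  have hflags : ∀ k : ℕ, (p ^ k) β ∈ G.flags := by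
    intro k
    induction k with
    | zero => exact hU ▸ Finset.mem_union_right _ hc.1
    | succ k ih =>
      rw [pow_succ', Equiv.Perm.mul_apply]
      exact perm_mem_of G.fix1 G.inv1 (perm_mem_of G.fix2 G.inv2 ih)
  -- `p⁻¹ β = s2 (s1 β)` lies in `Pf`, and `p⁻¹` is a power of `p`
  have hex : ∃ k : ℕ, (p ^ k) β ∈ Pf := by
    obtain ⟨k, hk : p ^ k = p⁻¹⟩ :=
      mem_powers_iff_mem_zpowers.mpr (inv_mem (Subgroup.mem_zpowers p))
    refine ⟨k, ?_⟩
    have hinv : p⁻¹ β = G.s2 (G.s1 β) := by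
      rw [Equiv.Perm.inv_eq_iff_eq]
      simp only [p, Equiv.Perm.mul_apply, G.inv1, G.inv2]
    rw [hk, hinv]
    exact (hP.2 _ hc.2.1).2
  obtain ⟨k, hval, hk, hmin⟩ := ret_spec hex
  obtain ⟨j, rfl⟩ : ∃ j, k = j + 1 := Nat.exists_eq_succ_of_ne_zero <| by
    rintro rfl
    exact Finset.disjoint_left.1 hD hk hc.1
  have hjQ : (p ^ j) β ∈ Qf :=
    (Finset.mem_union.1 (hU ▸ hflags j)).resolve_left (hmin j j.lt_succ_self)
  have hstep : (p ^ (j + 1)) β = G.s1 (G.s2 ((p ^ j) β)) := by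
    rw [pow_succ']
    rfl
  have hβ : G.s2 ((p ^ j) β) = β := hc.2.2 _ (hQ.2 _ hjQ).2 (hstep ▸ hk)
  rw [hval, hstep, hβ]

lemma indS1fun_eq_of_isUniqueCrossing (hU : Pf ∪ Qf = G.flags) (hD : Disjoint Pf Qf)
    (hP : G.IsEdgeSubset Pf) (hQ : G.IsEdgeSubset Qf) (hc : IsUniqueCrossing G.s1 Pf Qf β) :
    indS1fun G Pf =
      fun x => if x ∈ Pf then (if G.s1 x ∈ Pf then G.s1 x else G.s1 β) else x := by
  funext x
  unfold indS1fun
  by_cases hx : x ∈ Pf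
  · rw [if_pos hx, if_pos hx]
    by_cases h1 : G.s1 x ∈ Pf
    · rw [if_pos h1, ret_of_mem h1]
    · have h1Q : G.s1 x ∈ Qf :=
        (Finset.mem_union.1 (s1_mem_union_of_mem_left hU hx)).resolve_left h1
      rw [if_neg h1, hc.2.2 _ h1Q (by rwa [G.inv1]), ret_eq_of_isUniqueCrossing hU hD hP hQ hc]
  · rw [if_neg hx, if_neg hx]

lemma indS1_partialDual_of_isUniqueCrossing {A : Finset F} (hA : G.IsEdgeSubset A)
    (hU : Pf ∪ Qf = G.flags) (hD : Disjoint Pf Qf) (hP : G.IsEdgeSubset Pf)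
    (hQ : G.IsEdgeSubset Qf) (hc : IsUniqueCrossing G.s1 Pf Qf β) :
    indS1 (G.partialDual A) Pf = indS1 G Pf := by
  have hc' : IsUniqueCrossing (G.partialDual A).s1 Pf Qf β := by rwa [s1_partialDual hA]
  unfold indS1
  rw [indS1fun_eq_of_isUniqueCrossing (by rwa [flags_partialDual hA]) hD (hP.partialDual hA)
    (hQ.partialDual hA) hc', indS1fun_eq_of_isUniqueCrossing hU hD hP hQ hc, s1_partialDual hA]

lemma sharedVerts_eq_singleton {P Q : RibbonGraph F} (hU : P.flags ∪ Q.flags = G.flags)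
    (hD : Disjoint P.flags Q.flags) (hP : G.IsEdgeSubset P.flags)
    (hc : IsUniqueCrossing G.s1 P.flags Q.flags β) :
    G.sharedVerts P Q = {G.vertexOrbit (G.s1 β)} := by
  ext v
  constructor
  · rintro ⟨⟨x, -, rfl⟩, ⟨p, hpv, hpP⟩, ⟨q, hqv, hqQ⟩⟩
    have hqp : q ∈ G.vertexOrbit p := vertexOrbit_eq_of_mem hpv ▸ hqv
    have hβ := s1_mem_vertexOrbit_of_isUniqueCrossing hU hP hc hpP hqp
      (Finset.disjoint_right.1 hD hqQ)
    rw [Set.mem_singleton_iff, ← vertexOrbit_eq_of_mem hpv, vertexOrbit_eq_of_mem hβ]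
  · rintro rfl
    exact ⟨⟨_, hU ▸ Finset.mem_union_left _ hc.2.1, rfl⟩,
      ⟨_, mem_vertexOrbit_self _ _, hc.2.1⟩, ⟨β, mem_vertexOrbit_s1 _ _, hc.1⟩⟩

lemma exits_eq_singleton (hU : Pf ∪ Qf = G.flags) (hD : Disjoint Pf Qf)
    (hP : G.IsEdgeSubset Pf) (hQ : G.IsEdgeSubset Qf) (hc : IsUniqueCrossing G.s1 Pf Qf β) :
    {x | x ∈ G.vertexOrbit (G.s1 β) ∩ ↑Pf ∧
      (G.s2 * G.s1) x ∉ G.vertexOrbit (G.s1 β) ∩ ↑Pf} = {G.s1 β} := by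
  ext x
  simp only [Set.mem_ofPred_eq, Set.mem_singleton_iff, Set.mem_inter_iff, Finset.mem_coe,
    Equiv.Perm.mul_apply]
  constructor
  · rintro ⟨⟨hxv, hxP⟩, hexit⟩
    have h1 : G.s1 x ∉ Pf :=
      fun h => hexit ⟨s2_mem_vertexOrbit (s1_mem_vertexOrbit hxv), (hP.2 _ h).2⟩
    have h1Q : G.s1 x ∈ Qf :=
      (Finset.mem_union.1 (s1_mem_union_of_mem_left hU hxP)).resolve_left h1
    rw [← G.inv1 x, hc.2.2 _ h1Q (by rwa [G.inv1])]
  · rintro rfl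
    refine ⟨⟨mem_vertexOrbit_self _ _, hc.2.1⟩, fun h => Finset.disjoint_left.1 hD h.2 ?_⟩
    rw [G.inv1]
    exact (hQ.2 _ hc.1).2

end Crossing

lemma ncard_diff_preimage_comm {α : Type*} [Finite α] (σ : Equiv.Perm α) (u : Set α) :
    (u \ σ ⁻¹' u).ncard = (σ ⁻¹' u \ u).ncard := by
  have hpre : (σ ⁻¹' u).ncard = u.ncard :=
    Set.ncard_preimage_of_injective_subset_range σ.injective (by simp)
  have h1 := Set.ncard_inter_add_ncard_sdiff_eq_ncard u (σ ⁻¹' u)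
  have h2 := Set.ncard_inter_add_ncard_sdiff_eq_ncard (σ ⁻¹' u) u
  rw [Set.inter_comm] at h2
  omega

section Join

variable {G P Q : RibbonGraph F} {β : F}

lemma IsJoin.exists_isUniqueCrossing (h : IsJoin G P Q) :
    ∃ β, IsUniqueCrossing G.s1 P.flags Q.flags β := by
  obtain ⟨⟨⟨hP, -⟩, ⟨hQ, -⟩, -, -, -, -, hU, hI, hcard⟩, v, hv, harc⟩ := h
  have hD : Disjoint P.flags Q.flags := Finset.disjoint_iff_inter_eq_empty.2 hI
  have hcross_mem : ∀ y ∈ Q.flags, G.s1 y ∈ P.flags → y ∈ v := by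
    intro y hyQ hyP
    have hy : G.vertexOrbit y ∈ G.sharedVerts P Q :=
      ⟨⟨y, hQ.1 hyQ, rfl⟩, ⟨_, s1_mem_vertexOrbit (mem_vertexOrbit_self _ _), hyP⟩,
        ⟨y, mem_vertexOrbit_self _ _, hyQ⟩⟩
    rw [(Set.ncard_le_one (Set.toFinite _)).1 hcard.le _ hv _ hy]
    exact mem_vertexOrbit_self _ _
  obtain ⟨⟨x, -, rfl⟩, ⟨p, hpv, hpP⟩, ⟨q, hqv, hqQ⟩⟩ := hv
  obtain ⟨β, hβQ, hβP⟩ := exists_crossing_of_mem_vertexOrbit hU hP hpP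
    (vertexOrbit_eq_of_mem hpv ▸ hqv) (Finset.disjoint_right.1 hD hqQ)
  refine ⟨β, hβQ, hβP, fun y hyQ hyP => ?_⟩
  -- every crossing `w` enters `v ∩ P` under `s2 * s1`, and entries are as many as exits
  have hsub : {w | w ∈ Q.flags ∧ G.s1 w ∈ P.flags} ⊆
      (G.s2 * G.s1) ⁻¹' (G.vertexOrbit x ∩ ↑P.flags) \ (G.vertexOrbit x ∩ ↑P.flags) :=
    fun w ⟨hwQ, hwP⟩ => ⟨⟨s2_mem_vertexOrbit (s1_mem_vertexOrbit (hcross_mem w hwQ hwP)),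
      (hP.2 _ hwP).2⟩, fun h => Finset.disjoint_left.1 hD h.2 hwQ⟩
  have hle : {w | w ∈ Q.flags ∧ G.s1 w ∈ P.flags}.ncard ≤ 1 :=
    calc _ ≤ _ := Set.ncard_le_ncard hsub (Set.toFinite _)
      _ = _ := (ncard_diff_preimage_comm _ _).symm
      _ ≤ 1 := harc
  exact (Set.ncard_le_one (Set.toFinite _)).1 hle y ⟨hyQ, hyP⟩ β ⟨hβQ, hβP⟩

lemma IsJoin.of_isUniqueCrossing (hP : P.IsRibbonSubgraph G) (hQ : Q.IsRibbonSubgraph G)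
    (hPc : P.Connected) (hQc : Q.Connected) (hPne : P.flags.Nonempty)
    (hQne : Q.flags.Nonempty) (hU : P.flags ∪ Q.flags = G.flags)
    (hI : P.flags ∩ Q.flags = ∅) (hc : IsUniqueCrossing G.s1 P.flags Q.flags β) :
    IsJoin G P Q := by
  have hD : Disjoint P.flags Q.flags := Finset.disjoint_iff_inter_eq_empty.2 hI
  have hSV := sharedVerts_eq_singleton hU hD hP.1 hc
  refine ⟨⟨hP, hQ, hPc, hQc, hPne, hQne, hU, hI, by rw [hSV, Set.ncard_singleton]⟩,
    _, hSV ▸ Set.mem_singleton _, ?_⟩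
  rw [exits_eq_singleton hU hD hP.1 hQ.1 hc, Set.ncard_singleton]

end Join

/-- **Lemma 5.8(1).** The partial dual distributes over a join:
`(P ∨ Q)^A = P^(E(P) ∩ A) ∨ Q^(E(Q) ∩ A)`. -/
theorem partialDual_join (G P Q : RibbonGraph F) (A : Finset F)
    (h : IsJoin G P Q) (hA : G.IsEdgeSubset A) :
    IsJoin (G.partialDual A)
      (P.partialDual (P.flags ∩ A)) (Q.partialDual (Q.flags ∩ A)) := by
  obtain ⟨β, hc⟩ := h.exists_isUniqueCrossing
  obtain ⟨⟨hP, hQ, hPc, hQc, hPne, hQne, hU, hI, -⟩, -⟩ := h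
  have hD : Disjoint P.flags Q.flags := Finset.disjoint_iff_inter_eq_empty.2 hI
  have hPA := hP.isEdgeSubset_inter hA
  have hQA := hQ.isEdgeSubset_inter hA
  have hPf := flags_partialDual hPA
  have hQf := flags_partialDual hQA
  refine IsJoin.of_isUniqueCrossing (β := β)
    (hP.partialDual hA (indS1_partialDual_of_isUniqueCrossing hA hU hD hP.1 hQ.1 hc))
    (hQ.partialDual hA (indS1_partialDual_of_isUniqueCrossing hA
      ((Finset.union_comm _ _).trans hU) hD.symm hQ.1 hP.1 (hc.symm G.inv1)))
    (hPc.partialDual hPA) (hQc.partialDual hQA) (by rwa [hPf]) (by rwa [hQf]) ?_ ?_ ?_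
  · rw [hPf, hQf, flags_partialDual hA, hU]
  · rw [hPf, hQf, hI]
  · rwa [hPf, hQf, s1_partialDual hA]

end RibbonGraph

end RibbonPaper
end
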